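/- arXiv:1306.4043 — 5 statements merged into one kernel-verified Lean document; each statement's English description precedes it below -/
import Mathlib

section
/- For fixed k, the set of diagrammatic weights supported on {1,...,k} with labels in {∧,∨} decomposes into exactly two linkage classes (blocks): the weights with an even number of ∧'s and the weights with an odd number of ∧'s. -/
/-! STATEMENT 1: For fixed `k`, the set of diagrammatic weights supported on
`{1,…,k}` with labels in `{∧,∨}` decomposes into exactly two linkage classes:
the weights with an even number of `∧`'s and those with an odd number. -/

/-- Weights are `{∧,∨}`-sequences of length `k`, with `true = ∧`, `false = ∨`. -/
abbrev DWeight (k : ℕ) := Fin k → Bool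

/-- A basic linkage move: swapping neighboured labels `∧∨ ↔ ∨∧`, or swapping
the pair `∧∧ ↔ ∨∨` at the first two positions.  (This relation is symmetric.) -/
def basicMove (k : ℕ) (l m : DWeight k) : Prop :=
  (∃ i j : Fin k, (i : ℕ) + 1 = (j : ℕ) ∧ l i ≠ l j ∧ m i = l j ∧ m j = l i ∧
      ∀ t, t ≠ i → t ≠ j → m t = l t) ∨
  (∃ i j : Fin k, (i : ℕ) = 0 ∧ (j : ℕ) = 1 ∧ l i = l j ∧
      m i = !(l i) ∧ m j = !(l j) ∧ ∀ t, t ≠ i → t ≠ j → m t = l t)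

/-! Every basic move flips exactly two labels, so the parity of the number of `∧`'s is an
invariant. Conversely, the moves `∧∨ ↔ ∨∧` realise all adjacent transpositions of positions,
which generate the symmetric group, so weights with equally many `∧`'s are linked. Sorting the
`∧`'s to the front and then applying `∧∧ → ∨∨` at the first two positions removes two `∧`'s,
so every weight is linked to one with at most one `∧`. -/

open Finset Relation

namespace DWeight

variable {k : ℕ}

def upCount (l : DWeight k) : ℕ := #{i | l i = true}

def firstUps (k c : ℕ) : DWeight k := fun i => decide ((i : ℕ) < c)

lemma upCount_firstUps {c : ℕ} (hc : c ≤ k) : upCount (firstUps k c) = c := by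
  simp [upCount, firstUps, Fin.card_filter_val_lt, hc]

lemma upCount_le (l : DWeight k) : upCount l ≤ k :=
  (card_le_univ _).trans_eq (Fintype.card_fin k)

lemma natCast_upCount_xor (l : DWeight k) (s : Finset (Fin k)) :
    (upCount (fun t => xor (l t) (decide (t ∈ s))) : ZMod 2) = upCount l + #s := by
  have hs : (#s : ZMod 2) = ∑ t, if t ∈ s then 1 else 0 := by simp
  simp only [upCount, natCast_card_filter, hs, ← sum_add_distrib]
  refine sum_congr rfl fun t _ => ?_
  by_cases ht : t ∈ s <;> cases l t <;> simp [ht, CharTwo.add_self_eq_zero]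

lemma eq_xor_of_flip_pair {l m : DWeight k} {i j : Fin k} (hij : i ≠ j)
    (hi : m i = !l i) (hj : m j = !l j) (hrest : ∀ t, t ≠ i → t ≠ j → m t = l t) :
    m = fun t => xor (l t) (decide (t ∈ ({i, j} : Finset (Fin k)))) := by
  funext t
  by_cases hti : t = i
  · subst hti; simp [hi]
  by_cases htj : t = j
  · subst htj; simp [hj]
  simp [hti, htj, hrest t hti htj]

lemma upCount_mod_two_eq_of_basicMove {l m : DWeight k} (h : basicMove k l m) :
    upCount l % 2 = upCount m % 2 := by
  obtain ⟨i, j, hij, hm⟩ : ∃ i j : Fin k, i ≠ j ∧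
      m = fun t => xor (l t) (decide (t ∈ ({i, j} : Finset (Fin k)))) := by
    rcases h with ⟨i, j, hsucc, hne, hi, hj, hrest⟩ | ⟨i, j, hi0, hj1, -, hi, hj, hrest⟩
    · have hij' : i ≠ j := fun h => by subst h; omega
      refine ⟨i, j, hij', eq_xor_of_flip_pair hij' ?_ ?_ hrest⟩
      · rw [hi]; exact Bool.eq_not.mpr hne.symm
      · rw [hj]; exact Bool.eq_not.mpr hne
    · have hij' : i ≠ j := fun h => by subst h; omega
      exact ⟨i, j, hij', eq_xor_of_flip_pair hij' hi hj hrest⟩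
  rw [← ZMod.natCast_eq_natCast_iff', hm, natCast_upCount_xor, card_pair hij]
  simp [CharTwo.two_eq_zero]

lemma upCount_mod_two_eq_of_reflTransGen {l m : DWeight k} (h : ReflTransGen (basicMove k) l m) :
    upCount l % 2 = upCount m % 2 := by
  induction h with
  | refl => rfl
  | tail _ hmove ih => exact ih.trans (upCount_mod_two_eq_of_basicMove hmove)

instance : Std.Symm (basicMove k) where
  symm := by
    rintro l m (⟨i, j, hij, hne, hi, hj, hrest⟩ | ⟨i, j, hi0, hj1, heq, hi, hj, hrest⟩)
    · exact Or.inl ⟨i, j, hij, by rwa [hi, hj, ne_comm], hj.symm, hi.symm,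
        fun t hti htj => (hrest t hti htj).symm⟩
    · exact Or.inr ⟨i, j, hi0, hj1, by rw [hi, hj, heq], by rw [hi, Bool.not_not],
        by rw [hj, Bool.not_not], fun t hti htj => (hrest t hti htj).symm⟩

lemma basicMove_comp_swap {n : ℕ} {l : DWeight (n + 1)} {i : Fin n}
    (h : l i.castSucc ≠ l i.succ) :
    basicMove (n + 1) l (l ∘ Equiv.swap i.castSucc i.succ) := by
  refine Or.inl ⟨i.castSucc, i.succ, rfl, h, by simp, by simp, fun t hti htj => ?_⟩
  simp [Equiv.swap_apply_of_ne_of_ne hti htj]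

lemma reflTransGen_comp_perm (l : DWeight k) (σ : Equiv.Perm (Fin k)) :
    ReflTransGen (basicMove k) l (l ∘ σ) := by
  cases k with
  | zero => rw [Subsingleton.elim (l ∘ σ) l]
  | succ n =>
    have hσ : σ ∈ Submonoid.closure (Set.range fun i : Fin n => Equiv.swap i.castSucc i.succ) :=
      Equiv.Perm.mclosure_swap_castSucc_succ n ▸ Submonoid.mem_top σ
    induction hσ using Submonoid.closure_induction generalizing l with
    | mem τ hτ =>
      obtain ⟨i, rfl⟩ := hτ
      by_cases h : l i.castSucc = l i.succ
      · convert ReflTransGen.refl using 1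
        ext t
        simp only [Function.comp_apply, Equiv.swap_apply_def]
        split_ifs <;> simp_all
      · exact .single (basicMove_comp_swap h)
    | one => rfl
    | mul σ τ _ _ hσ hτ => exact (hσ l).trans (hτ (l ∘ σ))

lemma reflTransGen_of_upCount_eq {l m : DWeight k} (h : upCount l = upCount m) :
    ReflTransGen (basicMove k) l m := by
  obtain ⟨σ, hσ⟩ := Equiv.Perm.exists_map_finset_eq _ _ h
  convert reflTransGen_comp_perm l σ⁻¹ using 1
  ext t
  simpa using (Finset.ext_iff.mp hσ t).symm

lemma exists_reflTransGen_upCount_lt {l : DWeight k} (h : 2 ≤ upCount l) :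
    ∃ m, ReflTransGen (basicMove k) l m ∧ upCount m < upCount l := by
  set c := upCount l
  have hk : 2 ≤ k := h.trans (upCount_le l)
  have hc1 : 1 < c := h
  let m : DWeight k := fun t => decide (2 ≤ (t : ℕ) ∧ (t : ℕ) < c)
  have hmove : basicMove k (firstUps k c) m := by
    refine Or.inr ⟨⟨0, by omega⟩, ⟨1, by omega⟩, rfl, rfl, ?_, ?_, ?_, fun t ht0 ht1 => ?_⟩
    · simp [firstUps, hc1, hc1.pos]
    · simp [firstUps, m, hc1.pos]
    · simp [firstUps, m, hc1]
    · simp only [ne_eq, Fin.ext_iff] at ht0 ht1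
      simp [firstUps, m, show 2 ≤ (t : ℕ) by omega]
  refine ⟨m, (reflTransGen_of_upCount_eq (upCount_firstUps (upCount_le l)).symm).tail hmove, ?_⟩
  calc upCount m < upCount (firstUps k c) := by
        refine card_lt_card ((ssubset_iff_of_subset ?_).mpr ⟨⟨0, by omega⟩, ?_⟩)
        · exact monotone_filter_right _ fun t ht => by simp_all [firstUps, m]
        · simp [firstUps, m, hc1.pos]
    _ = c := upCount_firstUps (upCount_le l)

lemma exists_reflTransGen_upCount_lt_two (l : DWeight k) :
    ∃ m, ReflTransGen (basicMove k) l m ∧ upCount m < 2 := by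
  induction hc : upCount l using Nat.strong_induction_on generalizing l with
  | _ c ih =>
  by_cases h : 2 ≤ upCount l
  · obtain ⟨m, hlm, hm⟩ := exists_reflTransGen_upCount_lt h
    obtain ⟨m', hmm', hm'⟩ := ih _ (hc ▸ hm) m rfl
    exact ⟨m', hlm.trans hmm', hm'⟩
  · exact ⟨l, .refl, by omega⟩

end DWeight

open DWeight

/-- Two weights are linked (lie in the same block) iff they have the same parity
of the number of `∧`'s; moreover (for `k ≥ 1`) both parities occur, so there are
exactly two blocks: the even block `Λ_k^{0̄}` and the odd block `Λ_k^{1̄}`. -/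
theorem linkage_classes (k : ℕ) :
    (∀ l m : DWeight k,
      Relation.ReflTransGen (basicMove k) l m ↔
        (Finset.univ.filter fun i => l i = true).card % 2
          = (Finset.univ.filter fun i => m i = true).card % 2) ∧
    (1 ≤ k → ∃ l m : DWeight k, ¬ Relation.ReflTransGen (basicMove k) l m) := by
  refine ⟨fun l m => ⟨upCount_mod_two_eq_of_reflTransGen, fun hlm => ?_⟩, fun hk => ?_⟩
  · obtain ⟨l', hl, hl'⟩ := exists_reflTransGen_upCount_lt_two l
    obtain ⟨m', hm, hm'⟩ := exists_reflTransGen_upCount_lt_two m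
    have hcount : upCount l' = upCount m' := by
      have := upCount_mod_two_eq_of_reflTransGen hl
      have := upCount_mod_two_eq_of_reflTransGen hm
      change upCount l % 2 = upCount m % 2 at hlm
      omega
    exact (hl.trans (reflTransGen_of_upCount_eq hcount)).trans (Std.Symm.symm _ _ hm)
  · refine ⟨firstUps k 0, firstUps k 1, fun h => ?_⟩
    have := upCount_mod_two_eq_of_reflTransGen h
    rw [upCount_firstUps k.zero_le, upCount_firstUps hk] at this
    omega
end

section
/- If a diagrammatic weight μ in a block Λ is obtained from λ ∈ Λ by changing a (not necessarily adjacent) pair of labels ∧∨ (in positions i < j) to ∨∧, or a pair ∨∨ to ∧∧, then μ is strictly smaller than λ, i.e. μ < λ, in the reversed Bruhat order generated by the basic moves on neighboured positions. -/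
/-- One basic lowering move of the reversed Bruhat order: `m` is obtained from
`l` by changing a neighboured pair `∧∨` into `∨∧`, or the pair `∨∨` at the
first two positions into `∧∧`; in both cases `m` is declared smaller. -/
def lowerStep (k : ℕ) (l m : DWeight k) : Prop :=
  (∃ i j : Fin k, (i : ℕ) + 1 = (j : ℕ) ∧ l i = true ∧ l j = false ∧
      m i = false ∧ m j = true ∧ ∀ t, t ≠ i → t ≠ j → m t = l t) ∨
  (∃ i j : Fin k, (i : ℕ) = 0 ∧ (j : ℕ) = 1 ∧ l i = false ∧ l j = false ∧
      m i = true ∧ m j = true ∧ ∀ t, t ≠ i → t ≠ j → m t = l t)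

namespace NonlocalAux

variable {k : ℕ}

/-- Non-adjacent swap `∧∨ → ∨∧` lowers, by induction on the gap. -/
lemma swapA (n : ℕ) : ∀ (l m : DWeight k) (i j : Fin k), (j : ℕ) - (i : ℕ) ≤ n → i < j →
    l i = true → l j = false → m i = false → m j = true →
    (∀ t, t ≠ i → t ≠ j → m t = l t) → Relation.TransGen (lowerStep k) l m := by
  induction n with
  | zero =>
    intro l m i j hle hij _ _ _ _ _
    have : (i : ℕ) < (j : ℕ) := hij
    omega
  | succ n ih =>
    intro l m i j hle hij hli hlj hmi hmj hrest
    have hijv : (i : ℕ) < (j : ℕ) := hij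
    by_cases hadj : (i : ℕ) + 1 = (j : ℕ)
    · exact Relation.TransGen.single (Or.inl ⟨i, j, hadj, hli, hlj, hmi, hmj, hrest⟩)
    · have hjk : (j : ℕ) < k := j.isLt
      set t : Fin k := ⟨(i : ℕ) + 1, by omega⟩ with ht_def
      have htv : (t : ℕ) = (i : ℕ) + 1 := rfl
      have hit : i ≠ t := Fin.ne_of_val_ne (by omega)
      have htj : t ≠ j := Fin.ne_of_val_ne (by omega)
      have hij' : i ≠ j := Fin.ne_of_val_ne (by omega)
      have htltj : t < j := Fin.lt_def.mpr (by omega)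
      cases hlt : l t with
      | false =>
        set l₁ : DWeight k := Function.update (Function.update l i false) t true with hl₁
        have e1 : l₁ i = false := by simp [hl₁, Function.update_apply, hit]
        have e2 : l₁ t = true := by simp [hl₁, Function.update_apply]
        have e3 : l₁ j = false := by
          simp [hl₁, Function.update_apply, htj.symm, hij'.symm, hlj]
        have erest : ∀ s, s ≠ i → s ≠ t → l₁ s = l s := by
          intro s hs1 hs2
          simp [hl₁, Function.update_apply, hs1, hs2]
        have step1 : lowerStep k l l₁ := Or.inl ⟨i, t, htv.symm, hli, hlt, e1, e2, erest⟩
        have tg : Relation.TransGen (lowerStep k) l₁ m := by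
          refine ih l₁ m t j (by omega) htltj e2 e3 ?_ hmj ?_
          · rw [hrest t hit.symm htj]; exact hlt
          · intro s hs1 hs2
            by_cases hsi : s = i
            · rw [hsi, hmi, e1]
            · rw [hrest s hsi hs2, erest s hsi hs1]
        exact Relation.TransGen.head step1 tg
      | true =>
        set l₁ : DWeight k := Function.update (Function.update l t false) j true with hl₁
        have e1 : l₁ t = false := by simp [hl₁, Function.update_apply, htj]
        have e2 : l₁ j = true := by simp [hl₁, Function.update_apply]
        have e3 : l₁ i = true := by
          simp [hl₁, Function.update_apply, hij', hit, hli]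
        have erest : ∀ s, s ≠ t → s ≠ j → l₁ s = l s := by
          intro s hs1 hs2
          simp [hl₁, Function.update_apply, hs1, hs2]
        have tg : Relation.TransGen (lowerStep k) l l₁ :=
          ih l l₁ t j (by omega) htltj hlt hlj e1 e2 erest
        have step2 : lowerStep k l₁ m := by
          refine Or.inl ⟨i, t, htv.symm, e3, e1, hmi, ?_, ?_⟩
          · rw [hrest t hit.symm htj]; exact hlt
          · intro s hs1 hs2
            by_cases hsj : s = j
            · rw [hsj, hmj, e2]
            · rw [hrest s hs1 hsj, erest s hs2 hsj]
        exact Relation.TransGen.tail tg step2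

/-- `∨∨ → ∧∧` with the first position at index 0. -/
lemma swapB0 (l m : DWeight k) (i j : Fin k) (hi : (i : ℕ) = 0) (hij : i < j)
    (hli : l i = false) (hlj : l j = false) (hmi : m i = true) (hmj : m j = true)
    (hrest : ∀ t, t ≠ i → t ≠ j → m t = l t) : Relation.TransGen (lowerStep k) l m := by
  have hijv : (i : ℕ) < (j : ℕ) := hij
  have hjk : (j : ℕ) < k := j.isLt
  by_cases hj1 : (j : ℕ) = 1
  · exact Relation.TransGen.single (Or.inr ⟨i, j, hi, hj1, hli, hlj, hmi, hmj, hrest⟩)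
  · set o : Fin k := ⟨1, by omega⟩ with ho_def
    have hov : (o : ℕ) = 1 := rfl
    have hio : i ≠ o := Fin.ne_of_val_ne (by omega)
    have hoj : o ≠ j := Fin.ne_of_val_ne (by omega)
    have hij' : i ≠ j := Fin.ne_of_val_ne (by omega)
    have holtj : o < j := Fin.lt_def.mpr (by omega)
    cases hlo : l o with
    | false =>
      set l₁ : DWeight k := Function.update (Function.update l i true) o true with hl₁
      have e1 : l₁ i = true := by simp [hl₁, Function.update_apply, hio]
      have e2 : l₁ o = true := by simp [hl₁, Function.update_apply]
      have e3 : l₁ j = false := by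
        simp [hl₁, Function.update_apply, hoj.symm, hij'.symm, hlj]
      have erest : ∀ s, s ≠ i → s ≠ o → l₁ s = l s := by
        intro s hs1 hs2
        simp [hl₁, Function.update_apply, hs1, hs2]
      have step1 : lowerStep k l l₁ := Or.inr ⟨i, o, hi, hov, hli, hlo, e1, e2, erest⟩
      have tg : Relation.TransGen (lowerStep k) l₁ m := by
        refine swapA k l₁ m o j (by omega) holtj e2 e3 ?_ hmj ?_
        · rw [hrest o hio.symm hoj]; exact hlo
        · intro s hs1 hs2
          by_cases hsi : s = i
          · rw [hsi, hmi, e1]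
          · rw [hrest s hsi hs2, erest s hsi hs1]
      exact Relation.TransGen.head step1 tg
    | true =>
      set l₁ : DWeight k := Function.update (Function.update l o false) j true with hl₁
      have e1 : l₁ o = false := by simp [hl₁, Function.update_apply, hoj]
      have e2 : l₁ j = true := by simp [hl₁, Function.update_apply]
      have e3 : l₁ i = false := by
        simp [hl₁, Function.update_apply, hij', hio, hli]
      have erest : ∀ s, s ≠ o → s ≠ j → l₁ s = l s := by
        intro s hs1 hs2
        simp [hl₁, Function.update_apply, hs1, hs2]
      have tg : Relation.TransGen (lowerStep k) l l₁ :=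
        swapA k l l₁ o j (by omega) holtj hlo hlj e1 e2 erest
      have step2 : lowerStep k l₁ m := by
        refine Or.inr ⟨i, o, hi, hov, e3, e1, hmi, ?_, ?_⟩
        · rw [hrest o hio.symm hoj]; exact hlo
        · intro s hs1 hs2
          by_cases hsj : s = j
          · rw [hsj, hmj, e2]
          · rw [hrest s hs1 hsj, erest s hs2 hsj]
      exact Relation.TransGen.tail tg step2

/-- General `∨∨ → ∧∧`. -/
lemma swapB (l m : DWeight k) (i j : Fin k) (hij : i < j)
    (hli : l i = false) (hlj : l j = false) (hmi : m i = true) (hmj : m j = true)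
    (hrest : ∀ t, t ≠ i → t ≠ j → m t = l t) : Relation.TransGen (lowerStep k) l m := by
  have hijv : (i : ℕ) < (j : ℕ) := hij
  have hjk : (j : ℕ) < k := j.isLt
  by_cases hi0 : (i : ℕ) = 0
  · exact swapB0 l m i j hi0 hij hli hlj hmi hmj hrest
  · set z : Fin k := ⟨0, by omega⟩ with hz_def
    have hzv : (z : ℕ) = 0 := rfl
    have hzi : z ≠ i := Fin.ne_of_val_ne (by omega)
    have hzj : z ≠ j := Fin.ne_of_val_ne (by omega)
    have hij' : i ≠ j := Fin.ne_of_val_ne (by omega)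
    have hzlti : z < i := Fin.lt_def.mpr (by omega)
    have hzltj : z < j := Fin.lt_def.mpr (by omega)
    cases hlz : l z with
    | true =>
      set l₁ : DWeight k := Function.update (Function.update l z false) i true with hl₁
      have e1 : l₁ z = false := by simp [hl₁, Function.update_apply, hzi]
      have e2 : l₁ i = true := by simp [hl₁, Function.update_apply]
      have e3 : l₁ j = false := by
        simp [hl₁, Function.update_apply, hij'.symm, hzj.symm, hlj]
      have erest : ∀ s, s ≠ z → s ≠ i → l₁ s = l s := by
        intro s hs1 hs2
        simp [hl₁, Function.update_apply, hs1, hs2]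
      have tg1 : Relation.TransGen (lowerStep k) l l₁ :=
        swapA k l l₁ z i (by omega) hzlti hlz hli e1 e2 erest
      have tg2 : Relation.TransGen (lowerStep k) l₁ m := by
        refine swapB0 l₁ m z j hzv hzltj e1 e3 ?_ hmj ?_
        · rw [hrest z hzi hzj]; exact hlz
        · intro s hs1 hs2
          by_cases hsi : s = i
          · rw [hsi, hmi, e2]
          · rw [hrest s hsi hs2, erest s hs1 hsi]
      exact tg1.trans tg2
    | false =>
      set l₁ : DWeight k := Function.update (Function.update l z true) i true with hl₁
      have e1 : l₁ z = true := by simp [hl₁, Function.update_apply, hzi]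
      have e2 : l₁ i = true := by simp [hl₁, Function.update_apply]
      have e3 : l₁ j = false := by
        simp [hl₁, Function.update_apply, hij'.symm, hzj.symm, hlj]
      have erest : ∀ s, s ≠ z → s ≠ i → l₁ s = l s := by
        intro s hs1 hs2
        simp [hl₁, Function.update_apply, hs1, hs2]
      have tg1 : Relation.TransGen (lowerStep k) l l₁ :=
        swapB0 l l₁ z i hzv hzlti hlz hli e1 e2 erest
      have tg2 : Relation.TransGen (lowerStep k) l₁ m := by
        refine swapA k l₁ m z j (by omega) hzltj e1 e3 ?_ hmj ?_
        · rw [hrest z hzi hzj]; exact hlz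
        · intro s hs1 hs2
          by_cases hsi : s = i
          · rw [hsi, hmi, e2]
          · rw [hrest s hsi hs2, erest s hs1 hsi]
      exact tg1.trans tg2

end NonlocalAux

/-- If `m` is obtained from `l` by changing a (not necessarily neighboured)
pair of labels `∧∨` at positions `i < j` into `∨∧`, or a pair `∨∨` into `∧∧`,
then `m` is strictly smaller than `l` in the reversed Bruhat order, i.e. `m`
is reachable from `l` by finitely many (at least one) basic lowering moves. -/
theorem nonlocal_move_lowers (k : ℕ) (l m : DWeight k) (i j : Fin k)
    (hij : i < j)
    (hrest : ∀ t, t ≠ i → t ≠ j → m t = l t)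
    (h : (l i = true ∧ l j = false ∧ m i = false ∧ m j = true) ∨
         (l i = false ∧ l j = false ∧ m i = true ∧ m j = true)) :
    Relation.TransGen (lowerStep k) l m := by
  rcases h with ⟨h1, h2, h3, h4⟩ | ⟨h1, h2, h3, h4⟩
  · exact NonlocalAux.swapA k l m i j (by omega) hij h1 h2 h3 h4 hrest
  · exact NonlocalAux.swapB l m i j hij h1 h2 h3 h4 hrest
end

section
/- If λ̲μ is an oriented cup diagram (i.e. λ ⊂ μ), then λ ≤ μ in the Bruhat order on the block. -/
/-!
Record a weight by the prefix counts `prefixCount v true t`, the number of `∧`'s among its first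
`t` labels. Relative to `l`, the orientation `m` turns some cups of `l̲` clockwise: an undotted
cup `∨∧ ↦ ∧∨` raises the prefix count strictly inside the cup, a dotted cup `∧∧ ↦ ∨∨` lowers it
by at most 2, and by exactly 2 once both ends are passed. So the counts of `l` are bounded by
those of `m` plus `2d`, with equality at the end, `d` being the number of clockwise dotted cups.
Conversely such a bound lets one descend from `m` to `l`: by `d` front moves `∨∨ ↦ ∧∧`
interleaved with adjacent swaps `∧∨ ↦ ∨∧`, each swap taken where the count of the current weight
strictly exceeds that of the target.
-/

open scoped Classical

namespace TypeD

/-- A diagrammatic weight of the principal block of type `D_k`: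
a `{∧,∨}`-sequence of length `k`, with `true = ∧` and `false = ∨`. -/
abbrev DWeight (k : ℕ) := Fin k → Bool

variable {k : ℕ}

/-- Number of symbols `b` strictly between positions `i` and `j`. -/
noncomputable def between (l : DWeight k) (i j : Fin k) (b : Bool) : ℕ :=
  (Finset.univ.filter fun u : Fin k => i < u ∧ u < j ∧ l u = b).card

/-- Number of symbols `b` in the interval `(i, t]`. -/
noncomputable def upTo (l : DWeight k) (i t : Fin k) (b : Bool) : ℕ :=
  (Finset.univ.filter fun u : Fin k => i < u ∧ u ≤ t ∧ l u = b).card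

/-- `matched l i j` : the positions `i < j` carry `∨∧` and are joined by an
undotted cup in the cup diagram `l̲` (recursive matching of neighboured
`∨∧`-pairs, i.e. bracket matching with `∨ = (` and `∧ = )`). -/
def matched (l : DWeight k) (i j : Fin k) : Prop :=
  i < j ∧ l i = false ∧ l j = true ∧
    between l i j true = between l i j false ∧
    ∀ t, i < t → t < j → upTo l i t true ≤ upTo l i t false

/-- an `∧` not matched by an undotted cup. -/
def unmatchedUp (l : DWeight k) (i : Fin k) : Prop :=
  l i = true ∧ ¬ ∃ j, matched l j i

/-- a `∨` not matched by an undotted cup. -/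
def unmatchedDown (l : DWeight k) (i : Fin k) : Prop :=
  l i = false ∧ ¬ ∃ j, matched l i j

/-- number of unmatched `∧`'s strictly to the left of `i`. -/
noncomputable def upsBefore (l : DWeight k) (i : Fin k) : ℕ :=
  (Finset.univ.filter fun t : Fin k => t < i ∧ unmatchedUp l t).card

/-- undotted cup of the decorated cup diagram `l̲` (rule (C1)). -/
def uCup (l : DWeight k) (i j : Fin k) : Prop := matched l i j

/-- dotted cup of `l̲`: two consecutive unmatched `∧`'s, paired from the left
(rule (C3)). -/
def dCup (l : DWeight k) (i j : Fin k) : Prop :=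
  i < j ∧ unmatchedUp l i ∧ unmatchedUp l j ∧
    (∀ t, i < t → t < j → ¬ unmatchedUp l t) ∧ Even (upsBefore l i)

/-- undotted ray of `l̲` (rule (C2)): at each remaining `∨`. -/
def uRay (l : DWeight k) (i : Fin k) : Prop := unmatchedDown l i

/-- dotted ray of `l̲` (rule (C4)): at the last remaining single `∧`. -/
def dRay (l : DWeight k) (i : Fin k) : Prop :=
  unmatchedUp l i ∧ Even (upsBefore l i) ∧ ∀ t, i < t → ¬ unmatchedUp l t

/-- `sub l m` (written `l ⊂ m` in the paper): the weight `m`, put on top of the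
decorated cup diagram `l̲`, orients every cup and ray of `l̲`:
an undotted cup carries opposite labels, a dotted cup equal labels,
an undotted ray the label `∨`, a dotted ray the label `∧`. -/
def sub (l m : DWeight k) : Prop :=
  (∀ i j, uCup l i j → m i ≠ m j) ∧
  (∀ i j, dCup l i j → m i = m j) ∧
  (∀ i, uRay l i → m i = false) ∧
  (∀ i, dRay l i → m i = true)

lemma sub_refl (l : DWeight k) : sub l l := by
  refine ⟨fun i j h => ?_, fun i j h => ?_, fun i h => ?_, fun i h => ?_⟩
  · rw [h.2.1, h.2.2.1]; simp
  · rw [h.2.1.1, h.2.2.1.1]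
  · exact h.1
  · exact h.1.1

/-- The degree of the oriented cup diagram `l̲ m`: the number of clockwise cups
(an undotted cup is clockwise iff its left endpoint carries `∧`; a dotted cup is
clockwise iff its left endpoint carries `∨`). -/
noncomputable def degCup (l m : DWeight k) : ℕ :=
  ((Finset.univ : Finset (Fin k × Fin k)).filter fun p =>
    (uCup l p.1 p.2 ∧ m p.1 = true) ∨ (dCup l p.1 p.2 ∧ m p.1 = false)).card

/-- The defect (degree of atypicality) of `l`: the number of cups in `l̲`. -/
noncomputable def defect (l : DWeight k) : ℕ :=
  ((Finset.univ : Finset (Fin k × Fin k)).filter fun p =>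
    uCup l p.1 p.2 ∨ dCup l p.1 p.2).card

/-- One basic lowering move in the (reversed) Bruhat order:
swapping a neighboured pair `∧∨` into `∨∧`, or the pair `∨∨` at the first two
positions into `∧∧`. -/
def lowerStep (l m : DWeight k) : Prop :=
  (∃ i j : Fin k, (i : ℕ) + 1 = (j : ℕ) ∧ l i = true ∧ l j = false ∧
      m i = false ∧ m j = true ∧ ∀ t, t ≠ i → t ≠ j → m t = l t) ∨
  (∃ i j : Fin k, (i : ℕ) = 0 ∧ (j : ℕ) = 1 ∧ l i = false ∧ l j = false ∧
      m i = true ∧ m j = true ∧ ∀ t, t ≠ i → t ≠ j → m t = l t)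

/-- `l ≤ m` in the Bruhat order. -/
def bruhatLE (l m : DWeight k) : Prop := Relation.ReflTransGen lowerStep m l

/-- `l < m` in the Bruhat order. -/
def bruhatLT (l m : DWeight k) : Prop := Relation.TransGen lowerStep m l

end TypeD

namespace TypeD

open Finset Function Relation

variable {k : ℕ}

noncomputable def prefixCount (v : DWeight k) (b : Bool) (t : ℕ) : ℕ :=
  #{u : Fin k | (u : ℕ) < t ∧ v u = b}

section PrefixCount

variable (v : DWeight k) (b : Bool)

@[simp]
lemma prefixCount_zero : prefixCount v b 0 = 0 := by simp [prefixCount]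

lemma prefixCount_succ {t : ℕ} (ht : t < k) :
    prefixCount v b (t + 1) = prefixCount v b t + if v ⟨t, ht⟩ = b then 1 else 0 := by
  have hsplit : univ.filter (fun u : Fin k => (u : ℕ) < t + 1 ∧ v u = b) =
      univ.filter (fun u : Fin k => (u : ℕ) < t ∧ v u = b) ∪
        if v ⟨t, ht⟩ = b then {⟨t, ht⟩} else ∅ := by
    ext u
    split_ifs <;> simp only [mem_filter, mem_univ, true_and, mem_union, mem_singleton,
      Fin.ext_iff, notMem_empty, or_false] <;> grind
  rw [prefixCount, prefixCount, hsplit, card_union_of_disjoint]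
  · split_ifs <;> simp
  · split_ifs <;> simp

lemma prefixCount_le_self (t : ℕ) : prefixCount v b t ≤ t := by
  simpa [prefixCount] using card_le_card_of_injOn (fun u : Fin k => (u : ℕ)) (t := range t)
    (fun u hu => by simp_all) Fin.val_injective.injOn

lemma prefixCount_mono {s t : ℕ} (hst : s ≤ t) : prefixCount v b s ≤ prefixCount v b t :=
  card_le_card fun u hu => by
    simp only [mem_filter, mem_univ, true_and] at hu ⊢; exact ⟨by omega, hu.2⟩

lemma prefixCount_succ_le (t : ℕ) : prefixCount v b (t + 1) ≤ prefixCount v b t + 1 := by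
  by_cases ht : t < k
  · rw [prefixCount_succ v b ht]; split_ifs <;> omega
  · refine le_of_eq_of_le (congrArg card (filter_congr fun u _ => ?_)) (Nat.le_succ _)
    exact and_congr_left fun _ => by omega

lemma prefixCount_update_add (i : Fin k) (c : Bool) (t : ℕ) :
    prefixCount (update v i c) b t + (if (i : ℕ) < t ∧ v i = b then 1 else 0) =
      prefixCount v b t + if (i : ℕ) < t ∧ c = b then 1 else 0 := by
  simp only [prefixCount, card_filter]
  rw [← add_sum_erase _ _ (mem_univ i), ← add_sum_erase _ _ (mem_univ i), update_self,
    sum_congr rfl fun u hu => by rw [update_of_ne (ne_of_mem_erase hu)]]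
  omega

lemma eq_of_prefixCount_eq {w : DWeight k}
    (h : ∀ t ≤ k, prefixCount v true t = prefixCount w true t) : v = w := by
  funext u
  have hv := prefixCount_succ v true u.isLt
  have hw := prefixCount_succ w true u.isLt
  rw [h _ u.isLt.le, h _ u.isLt, hw] at hv
  simp only [Fin.eta, Nat.add_left_cancel_iff] at hv
  cases hvu : v u <;> cases hwu : w u <;> simp_all

end PrefixCount

section BruhatCriterion

variable {v w : DWeight k} {i j : Fin k}

lemma ne_of_val_add_one_eq (hij : (i : ℕ) + 1 = j) : j ≠ i := by
  rintro rfl; omega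

lemma lowerStep_swap (hij : (i : ℕ) + 1 = j) (hi : v i = true) (hj : v j = false) :
    lowerStep v (update (update v i false) j true) :=
  Or.inl ⟨i, j, hij, hi, hj, by simp [(ne_of_val_add_one_eq hij).symm], by simp,
    fun t hti htj => by simp [hti, htj]⟩

lemma prefixCount_swap (hij : (i : ℕ) + 1 = j) (hi : v i = true) (hj : v j = false) (t : ℕ) :
    prefixCount (update (update v i false) j true) true t + (if t = j then 1 else 0) =
      prefixCount v true t := by
  have e1 := prefixCount_update_add v true i false t
  have e2 := prefixCount_update_add (update v i false) true j true t
  rw [update_of_ne (ne_of_val_add_one_eq hij), hj] at e2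
  rw [hi] at e1
  split_ifs at e1 e2 ⊢ <;> simp_all <;> omega

lemma lowerStep_front (hi0 : (i : ℕ) = 0) (hj1 : (j : ℕ) = 1) (hi : v i = false)
    (hj : v j = false) : lowerStep v (update (update v i true) j true) := by
  have hji : j ≠ i := ne_of_val_add_one_eq (by omega)
  exact Or.inr ⟨i, j, hi0, hj1, hi, hj, by simp [hji.symm], by simp,
    fun t hti htj => by simp [hti, htj]⟩

lemma prefixCount_front (hi0 : (i : ℕ) = 0) (hj1 : (j : ℕ) = 1) (hi : v i = false)
    (hj : v j = false) (t : ℕ) :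
    prefixCount (update (update v i true) j true) true t = prefixCount v true t + min t 2 := by
  have e1 := prefixCount_update_add v true i true t
  have e2 := prefixCount_update_add (update v i true) true j true t
  rw [update_of_ne (ne_of_val_add_one_eq (by omega)), hj] at e2
  rw [hi] at e1
  split_ifs at e1 e2 <;> simp_all <;> omega

-- Going left from `s`, the excess of `v` over `w` cannot drop before an `∧` of `v` is met, and
-- it vanishes at position `0`.
lemma exists_swap_of_eq_false {s : ℕ} (hs : s < k) (hvs : v ⟨s, hs⟩ = false)
    (hlt : prefixCount w true s < prefixCount v true s) :
    ∃ (r : ℕ) (hr : r + 1 < k), v ⟨r, by omega⟩ = true ∧ v ⟨r + 1, hr⟩ = false ∧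
      prefixCount w true (r + 1) < prefixCount v true (r + 1) := by
  induction s with
  | zero => simp at hlt
  | succ s ih =>
    by_cases hv : v ⟨s, by omega⟩ = true
    · exact ⟨s, hs, hv, hvs, hlt⟩
    · have hsucc := prefixCount_succ v true (t := s) (by omega)
      have := prefixCount_mono w true (Nat.le_add_right s 1)
      simp only [hv, Bool.false_eq_true, if_false] at hsucc
      exact ih (by omega) (by simpa using hv) (by omega)

lemma exists_swap_of_prefixCount_le (hle : ∀ t ≤ k, prefixCount w true t ≤ prefixCount v true t)
    (heq : prefixCount w true k = prefixCount v true k) (hne : v ≠ w) :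
    ∃ (r : ℕ) (hr : r + 1 < k), v ⟨r, by omega⟩ = true ∧ v ⟨r + 1, hr⟩ = false ∧
      prefixCount w true (r + 1) < prefixCount v true (r + 1) := by
  let Exceeds : ℕ → Prop := fun t => prefixCount w true t < prefixCount v true t
  obtain ⟨t₀, ht₀, hlt₀⟩ : ∃ t ≤ k, Exceeds t := by
    by_contra! h
    exact hne (eq_of_prefixCount_eq v fun t ht => le_antisymm (not_lt.1 (h t ht)) (hle t ht))
  -- at the last position where `v` exceeds `w`, `v` carries a `∨`
  let t := Nat.findGreatest Exceeds k
  have hlt : Exceeds t := Nat.findGreatest_spec ht₀ hlt₀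
  have htk : t < k := lt_of_le_of_ne (Nat.findGreatest_le k) fun h => by
    simp only [Exceeds, h] at hlt; omega
  have hnext : ¬ Exceeds (t + 1) := Nat.findGreatest_is_greatest (Nat.lt_succ_self t) htk
  refine exists_swap_of_eq_false htk ?_ hlt
  by_contra hvt
  have hsucc := prefixCount_succ v true htk
  have := prefixCount_succ_le w true t
  rw [Bool.not_eq_false] at hvt
  rw [hvt, if_pos rfl] at hsucc
  simp only [Exceeds] at hlt hnext
  omega

theorem reflTransGen_lowerStep_of_prefixCount_le
    (hle : ∀ t ≤ k, prefixCount w true t ≤ prefixCount v true t)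
    (heq : prefixCount w true k = prefixCount v true k) : ReflTransGen lowerStep v w := by
  induction hN : ∑ t ∈ range (k + 1), prefixCount v true t using Nat.strong_induction_on
    generalizing v with
  | _ N ih =>
    by_cases hvw : v = w
    · exact hvw ▸ .refl
    obtain ⟨r, hr, hvr, hvr', hlt⟩ := exists_swap_of_prefixCount_le hle heq hvw
    have hcount := prefixCount_swap (j := ⟨r + 1, hr⟩) rfl hvr hvr'
    refine .head (lowerStep_swap rfl hvr hvr') (ih _ ?_ ?_ ?_ rfl)
    · rw [← hN, ← sum_congr rfl fun t _ => hcount t, sum_add_distrib, sum_ite_eq']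
      simp only [mem_range, if_pos (by omega : r + 1 < k + 1)]
      omega
    · intro t ht
      have hc := hcount t
      have := hle t ht
      split_ifs at hc with h
      · obtain rfl : t = r + 1 := h
        omega
      · omega
    · have := hcount k
      rw [if_neg (by simp; omega)] at this
      omega

noncomputable def eraseFirstTwoUps (v : DWeight k) : DWeight k :=
  fun u => v u && decide (2 ≤ prefixCount v true u)

lemma prefixCount_eraseFirstTwoUps (v : DWeight k) {t : ℕ} (ht : t ≤ k) :
    prefixCount (eraseFirstTwoUps v) true t = prefixCount v true t - 2 := by
  induction t with
  | zero => simp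
  | succ t ih =>
    rw [prefixCount_succ _ _ ht, prefixCount_succ _ _ ht, ih (by omega)]
    simp only [eraseFirstTwoUps, Bool.and_eq_true, decide_eq_true_eq]
    split_ifs <;> grind

theorem reflTransGen_lowerStep_of_prefixCount_le_add (d : ℕ)
    (hle : ∀ t ≤ k, prefixCount w true t ≤ prefixCount v true t + 2 * d)
    (heq : prefixCount w true k = prefixCount v true k + 2 * d) : ReflTransGen lowerStep v w := by
  induction d generalizing w with
  | zero => exact reflTransGen_lowerStep_of_prefixCount_le hle heq
  | succ d ih =>
    -- `w` is reached from `eraseFirstTwoUps w` by the front move followed by swaps.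
    have hk : 2 ≤ k := by have := prefixCount_le_self w true k; omega
    have hfront : ∀ u : Fin k, (u : ℕ) < 2 → eraseFirstTwoUps w u = false := fun u hu => by
      have := prefixCount_le_self w true u
      simp only [eraseFirstTwoUps, Bool.and_eq_false_iff, decide_eq_false_iff_not]
      omega
    have hw0 : eraseFirstTwoUps w ⟨0, by omega⟩ = false := hfront _ (by simp)
    have hw1 : eraseFirstTwoUps w ⟨1, by omega⟩ = false := hfront _ (by simp)
    refine (ih (fun t ht => ?_) ?_).trans <| .head (lowerStep_front rfl rfl hw0 hw1)
      (reflTransGen_lowerStep_of_prefixCount_le (fun t ht => ?_) ?_)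
    · have := hle t ht; rw [prefixCount_eraseFirstTwoUps w ht]; omega
    · rw [prefixCount_eraseFirstTwoUps w le_rfl]; omega
    · have := prefixCount_le_self w true t
      rw [prefixCount_front rfl rfl hw0 hw1, prefixCount_eraseFirstTwoUps w ht]; omega
    · rw [prefixCount_front rfl rfl hw0 hw1, prefixCount_eraseFirstTwoUps w le_rfl]; omega

end BruhatCriterion

section Matching

variable {l : DWeight k}

lemma prefixCount_add_card_Ico (v : DWeight k) (b : Bool) {x y : ℕ} (hxy : x ≤ y) :
    prefixCount v b x + #{u : Fin k | x ≤ u ∧ (u : ℕ) < y ∧ v u = b} = prefixCount v b y := by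
  rw [prefixCount, prefixCount, ← card_union_of_disjoint]
  · congr 1; ext u; simp only [mem_union, mem_filter, mem_univ, true_and]; grind
  · simp +contextual [disjoint_left]

lemma prefixCount_add_upTo (b : Bool) {a t : Fin k} (hat : a ≤ t) :
    prefixCount l b (a + 1) + upTo l a t b = prefixCount l b (t + 1) := by
  have hxy : (a : ℕ) + 1 ≤ t + 1 := by have := Fin.le_def.1 hat; omega
  rw [← prefixCount_add_card_Ico l b hxy, upTo]
  congr 2
  refine filter_congr fun u _ => ?_
  simp only [Fin.lt_def, Fin.le_def]
  constructor <;> rintro ⟨h1, h2, h3⟩ <;> exact ⟨by omega, by omega, h3⟩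

lemma prefixCount_add_between (b : Bool) {a j : Fin k} (haj : a < j) :
    prefixCount l b (a + 1) + between l a j b = prefixCount l b j := by
  rw [← prefixCount_add_card_Ico l b (Fin.lt_def.1 haj), between]
  rfl

-- `∨` steps up and `∧` steps down: `matched l a b` is an excursion strictly above `height l a`
-- from `a + 1` to `b`, which makes partners unique.
noncomputable def height (l : DWeight k) (t : ℕ) : ℤ :=
  prefixCount l false t - prefixCount l true t

lemma height_succ (l : DWeight k) (a : Fin k) :
    height l (a + 1) = height l a + if l a = true then -1 else 1 := by
  rw [height, height, prefixCount_succ _ _ a.isLt, prefixCount_succ _ _ a.isLt]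
  cases l a <;> simp <;> ring

variable {a a' b b' : Fin k}

lemma matched.height_lt (hm : matched l a b) {x : ℕ} (hax : a < x) (hxb : x ≤ b) :
    height l a < height l x := by
  obtain ⟨hab, hla, -, -, hdom⟩ := hm
  have hstart : height l (a + 1) = height l a + 1 := by simp [height_succ, hla]
  obtain rfl | hx := (show (a : ℕ) + 1 ≤ x from hax).eq_or_lt
  · omega
  let t : Fin k := ⟨x - 1, by omega⟩
  have hat : a < t := Fin.lt_def.2 (by simp [t]; omega)
  have htb : t < b := Fin.lt_def.2 (by simp [t]; omega)
  have := hdom t hat htb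
  have e1 := prefixCount_add_upTo (l := l) true hat.le
  have e2 := prefixCount_add_upTo (l := l) false hat.le
  have hx : (t : ℕ) + 1 = x := by simp [t]; omega
  rw [hx] at e1 e2
  simp only [height] at hstart ⊢
  omega

lemma matched.height_right (hm : matched l a b) : height l b = height l a + 1 := by
  obtain ⟨hab, hla, -, hbal, -⟩ := hm
  have hstart : height l (a + 1) = height l a + 1 := by simp [height_succ, hla]
  have e1 := prefixCount_add_between (l := l) true hab
  have e2 := prefixCount_add_between (l := l) false hab
  simp only [height] at hstart ⊢
  omega

lemma matched.height_right_succ (hm : matched l a b) : height l (b + 1) = height l a := by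
  rw [height_succ, hm.height_right, hm.2.2.1]; simp

lemma matched.left_unique (h : matched l a b) (h' : matched l a' b) : a = a' := by
  by_contra hne
  rcases lt_or_gt_of_ne hne with hlt | hlt
  · have := h.height_lt (Fin.lt_def.1 hlt) (Fin.le_def.1 h'.1.le)
    have := h.height_right; have := h'.height_right; omega
  · have := h'.height_lt (Fin.lt_def.1 hlt) (Fin.le_def.1 h.1.le)
    have := h.height_right; have := h'.height_right; omega

lemma matched.right_unique (h : matched l a b) (h' : matched l a b') : b = b' := by
  by_contra hne
  rcases lt_or_gt_of_ne hne with hlt | hlt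
  · have := h'.height_lt (x := b + 1) (by have := Fin.lt_def.1 h.1; omega) (Fin.lt_def.1 hlt)
    have := h.height_right_succ; omega
  · have := h.height_lt (x := b' + 1) (by have := Fin.lt_def.1 h'.1; omega) (Fin.lt_def.1 hlt)
    have := h'.height_right_succ; omega

end Matching

section DottedCups

variable {l : DWeight k} {p p' q q' u : Fin k}

lemma upsBefore_eq_succ (hpq : p < q) (hp : unmatchedUp l p)
    (hgap : ∀ t, p < t → t < q → ¬ unmatchedUp l t) : upsBefore l q = upsBefore l p + 1 := by
  rw [upsBefore, upsBefore, ← card_insert_of_notMem (a := p) (by simp)]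
  congr 1
  ext t
  simp only [mem_filter, mem_univ, true_and, mem_insert]
  constructor
  · rintro ⟨htq, ht⟩
    rcases lt_trichotomy t p with htp | rfl | hpt
    · exact Or.inr ⟨htp, ht⟩
    · exact Or.inl rfl
    · exact absurd ht (hgap t hpt htq)
  · rintro (rfl | ⟨htp, ht⟩)
    · exact ⟨hpq, hp⟩
    · exact ⟨htp.trans hpq, ht⟩

lemma dCup.upsBefore_right (h : dCup l p q) : upsBefore l q = upsBefore l p + 1 :=
  upsBefore_eq_succ h.1 h.2.1 h.2.2.2.1

lemma dCup.right_unique (h : dCup l p q) (h' : dCup l p q') : q = q' := by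
  rcases lt_trichotomy q q' with hlt | heq | hlt
  · exact absurd h.2.2.1 (h'.2.2.2.1 q h.1 hlt)
  · exact heq
  · exact absurd h'.2.2.1 (h.2.2.2.1 q' h'.1 hlt)

lemma dCup.left_unique (h : dCup l p q) (h' : dCup l p' q) : p = p' := by
  rcases lt_trichotomy p p' with hlt | heq | hlt
  · exact absurd h'.2.1 (h.2.2.2.1 p' hlt h'.1)
  · exact heq
  · exact absurd h.2.1 (h'.2.2.2.1 p hlt h.1)

lemma exists_dCup_right (hu : unmatchedUp l u) (hev : Even (upsBefore l u))
    (hlater : ∃ t, u < t ∧ unmatchedUp l t) : ∃ q, dCup l u q := by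
  have hne : (univ.filter fun t => u < t ∧ unmatchedUp l t).Nonempty := by
    obtain ⟨t, ht⟩ := hlater
    exact ⟨t, by simpa using ht⟩
  obtain ⟨huq, hq⟩ := mem_filter.1 (min'_mem _ hne) |>.2
  refine ⟨_, huq, hu, hq, fun t hut htq ht => ?_, hev⟩
  exact absurd (min'_le _ t (by simp [hut, ht])) (not_le.2 htq)

lemma exists_dCup_left (hu : unmatchedUp l u) (hodd : ¬ Even (upsBefore l u)) :
    ∃ p, dCup l p u := by
  have hne : (univ.filter fun t => t < u ∧ unmatchedUp l t).Nonempty := by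
    rw [← card_pos]
    exact Nat.pos_of_ne_zero fun h0 => hodd (by rw [upsBefore, h0]; exact Even.zero)
  obtain ⟨hpu, hp⟩ := mem_filter.1 (max'_mem _ hne) |>.2
  have hgap : ∀ t, max' _ hne < t → t < u → ¬ unmatchedUp l t := fun t hpt htu ht =>
    absurd (le_max' _ t (by simp [htu, ht])) (not_le.2 hpt)
  refine ⟨_, hpu, hp, hu, hgap, ?_⟩
  rw [upsBefore_eq_succ hpu hp hgap, Nat.even_add_one, not_not] at hodd
  exact hodd

lemma dCup.not_dCup_right (h : dCup l p u) : ¬ dCup l u q := fun h' => by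
  have := h'.2.2.2.2
  rw [h.upsBefore_right, Nat.even_add_one] at this
  exact this h.2.2.2.2

end DottedCups

section Orientation

variable {l m : DWeight k}

noncomputable def clockwiseUCups (l m : DWeight k) : Finset (Fin k × Fin k) :=
  {x | uCup l x.1 x.2 ∧ m x.1 = true}

noncomputable def clockwiseDCups (l m : DWeight k) : Finset (Fin k × Fin k) :=
  {x | dCup l x.1 x.2 ∧ m x.1 = false}

lemma injOn_fst_clockwiseUCups : Set.InjOn Prod.fst (clockwiseUCups l m : Set (Fin k × Fin k)) := by
  rintro ⟨a, b⟩ hx ⟨a', b'⟩ hy (rfl : a = a')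
  simp only [clockwiseUCups, coe_filter, mem_univ, true_and] at hx hy
  exact Prod.ext rfl (hx.1.right_unique hy.1)

lemma injOn_snd_clockwiseUCups : Set.InjOn Prod.snd (clockwiseUCups l m : Set (Fin k × Fin k)) := by
  rintro ⟨a, b⟩ hx ⟨a', b'⟩ hy (rfl : b = b')
  simp only [clockwiseUCups, coe_filter, mem_univ, true_and] at hx hy
  exact Prod.ext (hx.1.left_unique hy.1) rfl

lemma injOn_fst_clockwiseDCups : Set.InjOn Prod.fst (clockwiseDCups l m : Set (Fin k × Fin k)) := by
  rintro ⟨a, b⟩ hx ⟨a', b'⟩ hy (rfl : a = a')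
  simp only [clockwiseDCups, coe_filter, mem_univ, true_and] at hx hy
  exact Prod.ext rfl (hx.1.right_unique hy.1)

lemma injOn_snd_clockwiseDCups : Set.InjOn Prod.snd (clockwiseDCups l m : Set (Fin k × Fin k)) := by
  rintro ⟨a, b⟩ hx ⟨a', b'⟩ hy (rfl : b = b')
  simp only [clockwiseDCups, coe_filter, mem_univ, true_and] at hx hy
  exact Prod.ext (hx.1.left_unique hy.1) rfl

lemma sub.down_up_iff (h : sub l m) (u : Fin k) :
    l u = false ∧ m u = true ↔ ∃ b, uCup l u b ∧ m u = true := by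
  constructor
  · rintro ⟨hl, hm⟩
    by_contra! hnone
    have := h.2.2.1 u ⟨hl, fun ⟨b, hb⟩ => hnone b hb hm⟩
    simp_all
  · rintro ⟨b, hb, hm⟩
    exact ⟨hb.2.1, hm⟩

lemma sub.up_down_iff (h : sub l m) (u : Fin k) :
    l u = true ∧ m u = false ↔ (∃ a, uCup l a u ∧ m a = true) ∨
      (∃ q, dCup l u q ∧ m u = false) ∨ (∃ p, dCup l p u ∧ m p = false) := by
  constructor
  · rintro ⟨hl, hm⟩
    by_cases hmatched : ∃ a, matched l a u
    · obtain ⟨a, ha⟩ := hmatched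
      have := h.1 a u ha
      exact Or.inl ⟨a, ha, by simpa [hm] using this⟩
    have hu : unmatchedUp l u := ⟨hl, hmatched⟩
    by_cases hev : Even (upsBefore l u)
    · by_cases hlater : ∃ t, u < t ∧ unmatchedUp l t
      · exact Or.inr (Or.inl ((exists_dCup_right hu hev hlater).imp fun q hq => ⟨hq, hm⟩))
      · have := h.2.2.2 u ⟨hu, hev, fun t hut ht => hlater ⟨t, hut, ht⟩⟩
        simp_all
    · obtain ⟨p, hp⟩ := exists_dCup_left hu hev
      exact Or.inr (Or.inr ⟨p, hp, (h.2.1 p u hp).trans hm⟩)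
  · rintro (⟨a, ha, hma⟩ | ⟨q, hq, hm⟩ | ⟨p, hp, hmp⟩)
    · exact ⟨ha.2.2.1, by simpa [hma] using (h.1 a u ha).symm⟩
    · exact ⟨hq.2.1.1, hm⟩
    · exact ⟨hp.2.2.1.1, (h.2.1 p u hp).symm.trans hmp⟩

lemma prefixCount_add_card_down_up (l m : DWeight k) (t : ℕ) :
    prefixCount l true t + #{u : Fin k | (u : ℕ) < t ∧ l u = false ∧ m u = true} =
      prefixCount m true t + #{u : Fin k | (u : ℕ) < t ∧ l u = true ∧ m u = false} := by
  rw [prefixCount, prefixCount, ← card_union_of_disjoint, ← card_union_of_disjoint]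
  · congr 1
    ext u
    simp only [mem_union, mem_filter, mem_univ, true_and]
    cases l u <;> cases m u <;> simp
  all_goals simp +contextual [disjoint_left]

lemma sub.card_down_up (h : sub l m) (t : ℕ) :
    #{u : Fin k | (u : ℕ) < t ∧ l u = false ∧ m u = true} =
      #{x ∈ clockwiseUCups l m | (x.1 : ℕ) < t} := by
  rw [← card_image_of_injOn (injOn_fst_clockwiseUCups.mono (coe_subset.2 (filter_subset _ _)))]
  congr 1
  ext u
  simp only [mem_filter, mem_univ, true_and, mem_image, clockwiseUCups, Prod.exists,
    exists_and_right, exists_eq_right, h.down_up_iff]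
  tauto

lemma sub.card_up_down (h : sub l m) (t : ℕ) :
    #{u : Fin k | (u : ℕ) < t ∧ l u = true ∧ m u = false} =
      #{x ∈ clockwiseUCups l m | (x.2 : ℕ) < t} + #{x ∈ clockwiseDCups l m | (x.1 : ℕ) < t} +
        #{x ∈ clockwiseDCups l m | (x.2 : ℕ) < t} := by
  set U := {x ∈ clockwiseUCups l m | (x.2 : ℕ) < t}
  set D₁ := {x ∈ clockwiseDCups l m | (x.1 : ℕ) < t}
  set D₂ := {x ∈ clockwiseDCups l m | (x.2 : ℕ) < t}
  have hset : ({u : Fin k | (u : ℕ) < t ∧ l u = true ∧ m u = false} : Finset (Fin k)) =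
      U.image Prod.snd ∪ D₁.image Prod.fst ∪ D₂.image Prod.snd := by
    ext u
    simp only [U, D₁, D₂, mem_union, mem_filter, mem_univ, true_and, mem_image,
      clockwiseUCups, clockwiseDCups, Prod.exists, exists_and_right, exists_eq_right,
      h.up_down_iff]
    grind
  have hUD₁ : Disjoint (U.image Prod.snd) (D₁.image Prod.fst) := by
    simp only [disjoint_left, U, D₁, clockwiseUCups, clockwiseDCups, mem_image, mem_filter,
      mem_univ, true_and, Prod.exists]
    rintro _ ⟨a, _, ⟨⟨ha, -⟩, -⟩, rfl⟩ ⟨_, q, ⟨⟨hq, -⟩, -⟩, rfl⟩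
    exact hq.2.1.2 ⟨a, ha⟩
  have hUD₂ : Disjoint (U.image Prod.snd) (D₂.image Prod.snd) := by
    simp only [disjoint_left, U, D₂, clockwiseUCups, clockwiseDCups, mem_image, mem_filter,
      mem_univ, true_and, Prod.exists]
    rintro _ ⟨a, _, ⟨⟨ha, -⟩, -⟩, rfl⟩ ⟨p, _, ⟨⟨hp, -⟩, -⟩, rfl⟩
    exact hp.2.2.1.2 ⟨a, ha⟩
  have hD₁D₂ : Disjoint (D₁.image Prod.fst) (D₂.image Prod.snd) := by
    simp only [disjoint_left, D₁, D₂, clockwiseDCups, mem_image, mem_filter,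
      mem_univ, true_and, Prod.exists]
    rintro _ ⟨_, q, ⟨⟨hq, -⟩, -⟩, rfl⟩ ⟨p, _, ⟨⟨hp, -⟩, -⟩, rfl⟩
    exact hp.not_dCup_right hq
  rw [hset, card_union_of_disjoint (disjoint_union_left.2 ⟨hUD₂, hD₁D₂⟩),
    card_union_of_disjoint hUD₁]
  rw [card_image_of_injOn (injOn_snd_clockwiseUCups.mono (coe_subset.2 (filter_subset _ _))),
    card_image_of_injOn (injOn_fst_clockwiseDCups.mono (coe_subset.2 (filter_subset _ _))),
    card_image_of_injOn (injOn_snd_clockwiseDCups.mono (coe_subset.2 (filter_subset _ _)))]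

lemma sub.prefixCount_add (h : sub l m) (t : ℕ) :
    prefixCount l true t + #{x ∈ clockwiseUCups l m | (x.1 : ℕ) < t} =
      prefixCount m true t + #{x ∈ clockwiseUCups l m | (x.2 : ℕ) < t} +
        #{x ∈ clockwiseDCups l m | (x.1 : ℕ) < t} + #{x ∈ clockwiseDCups l m | (x.2 : ℕ) < t} := by
  have := prefixCount_add_card_down_up l m t
  rw [h.card_down_up, h.card_up_down] at this
  omega

lemma sub.prefixCount_le (h : sub l m) (t : ℕ) :
    prefixCount l true t ≤ prefixCount m true t + 2 * #(clockwiseDCups l m) := by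
  have := h.prefixCount_add t
  have hU : #{x ∈ clockwiseUCups l m | (x.2 : ℕ) < t} ≤
      #{x ∈ clockwiseUCups l m | (x.1 : ℕ) < t} :=
    card_le_card <| monotone_filter_right _ fun x hx hxt => by
      simp only [clockwiseUCups, mem_filter, mem_univ, true_and] at hx
      exact (Fin.lt_def.1 hx.1.1).trans hxt
  have hD₁ := card_filter_le (clockwiseDCups l m) fun x => (x.1 : ℕ) < t
  have hD₂ := card_filter_le (clockwiseDCups l m) fun x => (x.2 : ℕ) < t
  omega

lemma sub.prefixCount_length (h : sub l m) :
    prefixCount l true k = prefixCount m true k + 2 * #(clockwiseDCups l m) := by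
  have := h.prefixCount_add k
  simp only [Fin.is_lt, filter_true] at this
  omega

end Orientation

end TypeD

theorem sub_implies_bruhat_le (k : ℕ) (l m : TypeD.DWeight k)
    (h : TypeD.sub l m) : TypeD.bruhatLE l m :=
  TypeD.reflTransGen_lowerStep_of_prefixCount_le_add _ (fun t _ => h.prefixCount_le t)
    h.prefixCount_length
end

section
/- λ → μ (μ arises from λ by a λ-pair) if and only if the oriented cup diagram λ̲μ has degree exactly 1 and λ < μ in the Bruhat order. -/
open scoped Classical

namespace TypeD

variable {k : ℕ}

section Bruhat

/-- Moving a single `∧` to the right, to any position currently holding `∨`,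
is a chain of lowering steps. -/
lemma swapE : ∀ n : ℕ, ∀ w v : DWeight k, ∀ a b : Fin k,
    (b : ℕ) - (a : ℕ) ≤ n → a < b →
    w a = true → w b = false → v a = false → v b = true →
    (∀ t, t ≠ a → t ≠ b → v t = w t) →
    Relation.TransGen lowerStep w v := by
  intro n
  induction n with
  | zero =>
    intro w v a b hn hab _ _ _ _ _
    rw [Fin.lt_def] at hab
    omega
  | succ n ih =>
    intro w v a b hn hab hwa hwb hva hvb hvt
    have hab' : (a : ℕ) < b := hab
    by_cases hstep : (a : ℕ) + 1 = (b : ℕ)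
    · exact Relation.TransGen.single (Or.inl ⟨a, b, hstep, hwa, hwb, hva, hvb, hvt⟩)
    · have hb1 : (a : ℕ) + 1 < (b : ℕ) := by omega
      have ha1k : (a : ℕ) + 1 < k := lt_trans hb1 b.isLt
      set a' : Fin k := ⟨(a : ℕ) + 1, ha1k⟩ with ha'
      have haa' : a < a' := by rw [Fin.lt_def]; simp [ha']
      have ha'b : a' < b := by rw [Fin.lt_def]; simpa [ha'] using hb1
      have hane : a ≠ a' := ne_of_lt haa'
      have hane2 : a ≠ b := ne_of_lt hab
      have ha'ne : a' ≠ b := ne_of_lt ha'b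
      cases hwa' : w a' with
      | false =>
        set w' : DWeight k := fun t => if t = a then false else if t = a' then true else w t with hw'
        have h1 : lowerStep w w' := Or.inl ⟨a, a', rfl, hwa, hwa',
          by simp [hw'], by simp [hw', hane.symm],
          fun t ht1 ht2 => by simp [hw', ht1, ht2]⟩
        have h2 : Relation.TransGen lowerStep w' v := by
          refine ih w' v a' b (by have hval : (a' : ℕ) = (a : ℕ) + 1 := rfl; omega) ha'b (by simp [hw', hane.symm])
            (by simp [hw', ha'ne.symm, hane2.symm, hwb])
            (by rw [hvt a' hane.symm ha'ne]; exact hwa') hvb ?_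
          intro t ht1 ht2
          by_cases hta : t = a
          · subst hta; simp [hw', hva]
          · rw [hvt t hta ht2]; simp [hw', hta, ht1]
        exact h2.head h1
      | true =>
        set u : DWeight k := fun t => if t = a' then false else if t = b then true else w t with hu
        have h2 : Relation.TransGen lowerStep w u := by
          refine ih w u a' b (by have hval : (a' : ℕ) = (a : ℕ) + 1 := rfl; omega) ha'b hwa' hwb (by simp [hu])
            (by simp [hu, ha'ne.symm]) ?_
          intro t ht1 ht2
          simp [hu, ht1, ht2]
        have h1 : lowerStep u v := Or.inl ⟨a, a', rfl,
          by simp [hu, hane, hane2]; exact hwa, by simp [hu], hva,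
          by rw [hvt a' hane.symm ha'ne]; exact hwa', ?_⟩
        · exact h2.tail h1
        · intro t ht1 ht2
          by_cases htb : t = b
          · subst htb; simp [hu, hvb, Ne.symm ha'ne]
          · rw [hvt t ht1 htb]; simp [hu, ht2, htb]

/-- Raising a pair `∨∨ → ∧∧` (at arbitrary positions) is a chain of lowering
steps read downwards from the larger weight. -/
lemma flipTwo : ∀ n : ℕ, ∀ l m : DWeight k, ∀ i j : Fin k,
    (j : ℕ) ≤ n → i < j →
    l i = true → l j = true → m i = false → m j = false →
    (∀ t, t ≠ i → t ≠ j → m t = l t) →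
    Relation.TransGen lowerStep m l := by
  intro n
  induction n with
  | zero =>
    intro l m i j hn hij _ _ _ _ _
    rw [Fin.lt_def] at hij
    omega
  | succ n ih =>
    intro l m i j hn hij hli hlj hmi hmj hmt
    have hij' : (i : ℕ) < j := hij
    have hne : i ≠ j := ne_of_lt hij
    by_cases hc : ∃ c : Fin k, c < j ∧ c ≠ i ∧ l c = false
    · -- reduction: swap the `∨` at `c` with the `∧` at `j` in the target first
      obtain ⟨c, hcj, hci, hlc⟩ := hc
      have hcj' : c ≠ j := ne_of_lt hcj
      have hcjv : (c : ℕ) < j := hcj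
      set l' : DWeight k := fun t => if t = c then true else if t = j then false else l t with hl'
      have hswap : Relation.TransGen lowerStep l' l :=
        swapE (j : ℕ) l' l c j (by omega) hcj (by simp [hl'])
          (by simp [hl', Ne.symm hcj']) hlc hlj
          (fun t ht1 ht2 => by simp [hl', ht1, ht2])
      have hmc : m c = false := by rw [hmt c hci hcj']; exact hlc
      have hlast : ∀ t, t ≠ i → t ≠ c → m t = l' t := by
        intro t ht1 ht2
        by_cases htj : t = j
        · subst htj; simp [hl', Ne.symm hcj', hmj]
        · rw [hmt t ht1 htj]; simp [hl', ht2, htj]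
      rcases lt_trichotomy i c with hic | hic | hic
      · have step : Relation.TransGen lowerStep m l' :=
          ih l' m i c (by omega) hic (by simp [hl', Ne.symm hci, hne, hli])
            (by simp [hl']) hmi hmc hlast
        exact step.trans hswap
      · exact (hci hic.symm).elim
      · have step : Relation.TransGen lowerStep m l' :=
          ih l' m c i (by omega) hic (by simp [hl'])
            (by simp [hl', Ne.symm hci, hne, hli]) hmc hmi
            (fun t ht1 ht2 => hlast t ht2 ht1)
        exact step.trans hswap
    · -- everything before `j` is `∧`
      have hall : ∀ c : Fin k, c < j → l c = true := by
        intro c hcj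
        by_cases hci : c = i
        · rw [hci]; exact hli
        · cases hlcv : l c with
          | true => rfl
          | false => exact (hc ⟨c, hcj, hci, hlcv⟩).elim
      have hk1 : 0 < k := lt_of_le_of_lt (Nat.zero_le _) j.isLt
      by_cases hj01 : (j : ℕ) = 1
      · -- `i = 0`, `j = 1` : a single front step
        have hi0 : (i : ℕ) = 0 := by omega
        exact Relation.TransGen.single
          (Or.inr ⟨i, j, hi0, hj01, hmi, hmj, hli, hlj, fun t ht1 ht2 => (hmt t ht1 ht2).symm⟩)
      · have hj2 : 2 ≤ (j : ℕ) := by omega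
        have hk2 : 1 < k := lt_of_lt_of_le (by omega) (le_of_lt j.isLt)
        set z : Fin k := ⟨0, hk1⟩ with hzdef
        set o : Fin k := ⟨1, hk2⟩ with hodef
        have hz0 : (z : ℕ) = 0 := rfl
        have ho1 : (o : ℕ) = 1 := rfl
        have hzo : z ≠ o := Fin.ne_of_val_ne (by omega)
        have hzj : z ≠ j := Fin.ne_of_val_ne (by omega)
        have hoj : o ≠ j := Fin.ne_of_val_ne (by omega)
        have hzjlt : z < j := by rw [Fin.lt_def]; omega
        have hojlt : o < j := by rw [Fin.lt_def]; omega
        by_cases hi0 : (i : ℕ) = 0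
        · have hiz : i = z := Fin.ext (by omega)
          have hmo : m o = true := by
            rw [hmt o (Fin.ne_of_val_ne (by omega)) hoj]; exact hall o hojlt
          set x : DWeight k := fun t => if t = o then false else if t = j then true else m t with hx
          have s1 : Relation.TransGen lowerStep m x :=
            swapE (j : ℕ) m x o j (by omega) hojlt hmo hmj (by simp [hx])
              (by simp [hx, Ne.symm hoj]) (fun t ht1 ht2 => by simp [hx, ht1, ht2])
          have s2 : lowerStep x l := by
            refine Or.inr ⟨z, o, hz0, ho1, ?_, by simp [hx], hiz ▸ hli, hall o hojlt, ?_⟩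
            · simp only [hx]
              rw [if_neg hzo, if_neg hzj, ← hiz]
              exact hmi
            · intro t ht1 ht2
              by_cases htj : t = j
              · subst htj; simp [hx, Ne.symm hoj, hlj]
              · rw [← hmt t (fun h => ht1 (h.trans hiz)) htj]
                simp [hx, ht1, ht2, htj]
          exact s1.tail s2
        · by_cases hi1 : (i : ℕ) = 1
          · have hio : i = o := Fin.ext (by omega)
            have hmz : m z = true := by
              rw [hmt z (Fin.ne_of_val_ne (by omega)) hzj]; exact hall z hzjlt
            set x : DWeight k := fun t => if t = z then false else if t = j then true else m t with hx
            have s1 : Relation.TransGen lowerStep m x :=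
              swapE (j : ℕ) m x z j (by omega) hzjlt hmz hmj (by simp [hx])
                (by simp [hx, Ne.symm hzj]) (fun t ht1 ht2 => by simp [hx, ht1, ht2])
            have s2 : lowerStep x l := by
              refine Or.inr ⟨z, o, hz0, ho1, by simp [hx], ?_, hall z hzjlt, hio ▸ hli, ?_⟩
              · simp only [hx]
                rw [if_neg (Ne.symm hzo), if_neg hoj, ← hio]
                exact hmi
              · intro t ht1 ht2
                by_cases htj : t = j
                · subst htj; simp [hx, Ne.symm hzj, hlj]
                · rw [← hmt t (fun h => ht2 (h.trans hio)) htj]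
                  simp [hx, ht1, ht2, htj]
            exact s1.tail s2
          · -- `i ≥ 2`
            have hzi : z ≠ i := Fin.ne_of_val_ne (by omega)
            have hoi : o ≠ i := Fin.ne_of_val_ne (by omega)
            have hzilt : z < i := by rw [Fin.lt_def]; omega
            have hmz : m z = true := by rw [hmt z hzi hzj]; exact hall z hzjlt
            have hmo : m o = true := by rw [hmt o hoi hoj]; exact hall o hojlt
            set x1 : DWeight k := fun t => if t = z then false else if t = i then true else m t with hx1
            have s1 : Relation.TransGen lowerStep m x1 :=
              swapE (i : ℕ) m x1 z i (by omega) hzilt hmz hmi (by simp [hx1])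
                (by simp [hx1, Ne.symm hzi]) (fun t ht1 ht2 => by simp [hx1, ht1, ht2])
            set x2 : DWeight k := fun t => if t = o then false else if t = j then true else x1 t with hx2
            have hx1o : x1 o = true := by simp [hx1, Ne.symm hzo, hoi, hmo]
            have s2 : Relation.TransGen lowerStep x1 x2 :=
              swapE (j : ℕ) x1 x2 o j (by omega) hojlt hx1o
                (by simp [hx1, Ne.symm hzj, Ne.symm hne, hmj]) (by simp [hx2])
                (by simp [hx2, Ne.symm hoj]) (fun t ht1 ht2 => by simp [hx2, ht1, ht2])
            have s3 : lowerStep x2 l := by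
              refine Or.inr ⟨z, o, hz0, ho1, ?_, by simp [hx2], hall z hzjlt, hall o hojlt, ?_⟩
              · simp only [hx2]
                rw [if_neg hzo, if_neg hzj]
                simp [hx1]
              · intro t ht1 ht2
                by_cases htj : t = j
                · subst htj; simp [hx2, Ne.symm hoj, hlj]
                · by_cases hti : t = i
                  · subst hti
                    simp [hx2, hx1, Ne.symm hoi, hne, Ne.symm hzi, hli]
                  · rw [← hmt t hti htj]
                    simp [hx2, hx1, ht1, ht2, htj, hti]
            exact (s1.trans s2).tail s3

end Bruhat

end TypeD

/-- `lambdaPair l m` : `m` arises from `l` by a `λ`-pair, i.e. `m` is obtained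
from `l` by swapping `∨ ↔ ∧` at both endpoints of one (dotted or undotted) cup
of the cup diagram `l̲`. -/
def TypeD.lambdaPair {k : ℕ} (l m : TypeD.DWeight k) : Prop :=
  ∃ i j : Fin k, (TypeD.uCup l i j ∨ TypeD.dCup l i j) ∧
    m i = !(l i) ∧ m j = !(l j) ∧ ∀ t, t ≠ i → t ≠ j → m t = l t


namespace TypeD

variable {k : ℕ}

section Counting

lemma card_split {P Q R : Fin k → Prop} [DecidablePred P] [DecidablePred Q] [DecidablePred R]
    (h : ∀ u, P u ↔ Q u ∨ R u) (hd : ∀ u, Q u → R u → False) :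
    (Finset.univ.filter fun u => P u).card
      = (Finset.univ.filter fun u => Q u).card
        + (Finset.univ.filter fun u => R u).card := by
  rw [← Finset.card_union_of_disjoint]
  · congr 1
    ext u
    simp [h u]
  · rw [Finset.disjoint_left]
    intro u hu hu'
    simp only [Finset.mem_filter] at hu hu'
    exact hd u hu.2 hu'.2

lemma between_split (l : DWeight k) {i p j : Fin k} (h1 : i < p) (h2 : p < j) (b : Bool) :
    between l i j b = upTo l i p b + between l p j b := by
  unfold between upTo
  refine card_split (Q := fun u => i < u ∧ u ≤ p ∧ l u = b)
    (R := fun u => p < u ∧ u < j ∧ l u = b) (fun u => ?_)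
    (fun u hq hr => absurd (lt_of_le_of_lt hq.2.1 hr.1) (lt_irrefl u))
  constructor
  · rintro ⟨h3, h4, h5⟩
    rcases le_or_gt u p with h6 | h6
    · exact Or.inl ⟨h3, h6, h5⟩
    · exact Or.inr ⟨h6, h4, h5⟩
  · rintro (⟨h3, h4, h5⟩ | ⟨h3, h4, h5⟩)
    · exact ⟨h3, lt_of_le_of_lt h4 h2, h5⟩
    · exact ⟨lt_trans h1 h3, h4, h5⟩

lemma upTo_split (l : DWeight k) {i s p : Fin k} (h1 : i < s) (h2 : s ≤ p) (b : Bool) :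
    upTo l i p b = upTo l i s b
      + (Finset.univ.filter fun u => s < u ∧ u ≤ p ∧ l u = b).card := by
  unfold upTo
  refine card_split (Q := fun u => i < u ∧ u ≤ s ∧ l u = b)
    (R := fun u => s < u ∧ u ≤ p ∧ l u = b) (fun u => ?_)
    (fun u hq hr => absurd (lt_of_le_of_lt hq.2.1 hr.1) (lt_irrefl u))
  constructor
  · rintro ⟨h3, h4, h5⟩
    rcases le_or_gt u s with h6 | h6
    · exact Or.inl ⟨h3, h6, h5⟩
    · exact Or.inr ⟨h6, h4, h5⟩
  · rintro (⟨h3, h4, h5⟩ | ⟨h3, h4, h5⟩)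
    · exact ⟨h3, le_trans h4 h2, h5⟩
    · exact ⟨lt_trans h1 h3, h4, h5⟩

lemma upTo_end_eq (l : DWeight k) {i j : Fin k} (h1 : i < j) {b : Bool} (h2 : l j = b) :
    upTo l i j b = between l i j b + 1 := by
  have : (Finset.univ.filter fun u : Fin k => u = j ∧ l u = b).card = 1 := by
    have : (Finset.univ.filter fun u : Fin k => u = j ∧ l u = b) = {j} := by
      ext u; simp +contextual [h2]
    rw [this, Finset.card_singleton]
  rw [← this]
  unfold upTo between
  refine card_split (Q := fun u => i < u ∧ u < j ∧ l u = b)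
    (R := fun u => u = j ∧ l u = b) (fun u => ?_)
    (fun u hq hr => absurd hq.2.1 (by rw [hr.1]; exact lt_irrefl j))
  constructor
  · rintro ⟨h3, h4, h5⟩
    rcases lt_or_eq_of_le h4 with h6 | h6
    · exact Or.inl ⟨h3, h6, h5⟩
    · exact Or.inr ⟨h6, h5⟩
  · rintro (⟨h3, h4, h5⟩ | ⟨h3, h5⟩)
    · exact ⟨h3, le_of_lt h4, h5⟩
    · exact ⟨h3 ▸ h1, h3 ▸ le_refl j, h5⟩

lemma upTo_end_ne (l : DWeight k) {i j : Fin k} {b : Bool} (h2 : l j ≠ b) :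
    upTo l i j b = between l i j b := by
  unfold upTo between
  congr 1
  ext u
  simp only [Finset.mem_filter, Finset.mem_univ, true_and]
  constructor
  · rintro ⟨h3, h4, h5⟩
    rcases lt_or_eq_of_le h4 with h6 | h6
    · exact ⟨h3, h6, h5⟩
    · exact absurd (h6 ▸ h5) h2
  · rintro ⟨h3, h4, h5⟩
    exact ⟨h3, le_of_lt h4, h5⟩

end Counting

section Uniqueness

lemma matched_right_unique {l : DWeight k} {i j j' : Fin k}
    (hm : matched l i j) (hm' : matched l i j') : j = j' := by
  have key : ∀ a b : Fin k, matched l i a → matched l i b → a < b → False := by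
    intro a b ha hb hab
    have hpre := hb.2.2.2.2 a ha.1 hab
    rw [upTo_end_eq l ha.1 ha.2.2.1, upTo_end_ne l (by simp [ha.2.2.1])] at hpre
    have hbal := ha.2.2.2.1
    omega
  rcases lt_trichotomy j j' with h | h | h
  · exact (key j j' hm hm' h).elim
  · exact h
  · exact (key j' j hm' hm h).elim


lemma matched_left_unique {l : DWeight k} {i p j : Fin k}
    (hm : matched l i j) (hm' : matched l p j) : i = p := by
  have key : ∀ a b : Fin k, matched l a j → matched l b j → a < b → False := by
    intro a b ha hb hab
    have hbj : b < j := hb.1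
    have haj : a < j := ha.1
    -- split the balance equations
    have hsplit : ∀ c : Bool, between l a j c = upTo l a b c + between l b j c :=
      fun c => between_split l hab hbj c
    have hbal1 := ha.2.2.2.1
    have hbal2 := hb.2.2.2.1
    have hc : upTo l a b true = upTo l a b false := by
      have h1 := hsplit true
      have h2 := hsplit false
      omega
    -- b itself is false, so upTo l a b false ≥ 1
    have hbmem : b ∈ Finset.univ.filter fun u : Fin k => a < u ∧ u ≤ b ∧ l u = false := by
      simp [hab, hb.2.1]
    have hpos : 0 < upTo l a b false := by
      rw [upTo]
      exact Finset.card_pos.mpr ⟨b, hbmem⟩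
    -- the set of `true`s in (a, b] is nonempty
    have hTpos : 0 < upTo l a b true := hc ▸ hpos
    have hTne : (Finset.univ.filter fun u : Fin k => a < u ∧ u ≤ b ∧ l u = true).Nonempty := by
      rw [← Finset.card_pos]
      exact hTpos
    obtain ⟨s, hsmem, hsmax⟩ :
        ∃ s ∈ (Finset.univ.filter fun u : Fin k => a < u ∧ u ≤ b ∧ l u = true),
          ∀ u ∈ (Finset.univ.filter fun u : Fin k => a < u ∧ u ≤ b ∧ l u = true), u ≤ s :=
      ⟨_, Finset.max'_mem _ hTne, fun u hu => Finset.le_max' _ u hu⟩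
    simp only [Finset.mem_filter, Finset.mem_univ, true_and] at hsmem
    obtain ⟨has, hsb, hls⟩ := hsmem
    have hsb' : s < b := lt_of_le_of_ne hsb (by intro h; rw [h] at hls; rw [hb.2.1] at hls; exact Bool.noConfusion hls)
    -- no trues in (s, b]
    have hnoT : (Finset.univ.filter fun u : Fin k => s < u ∧ u ≤ b ∧ l u = true) = ∅ := by
      rw [Finset.eq_empty_iff_forall_notMem]
      intro u hu
      simp only [Finset.mem_filter, Finset.mem_univ, true_and] at hu
      have : u ≤ s := hsmax u (by simp [lt_trans has hu.1, hu.2.1, hu.2.2])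
      exact absurd hu.1 (not_lt_of_ge this)
    have hsplitT := upTo_split l has hsb true
    have hsplitF := upTo_split l has hsb false
    rw [hnoT] at hsplitT
    -- b is a false in (s, b]
    have hFpos : 0 < (Finset.univ.filter fun u : Fin k => s < u ∧ u ≤ b ∧ l u = false).card :=
      Finset.card_pos.mpr ⟨b, by simp [hsb', hb.2.1]⟩
    -- prefix condition of (a, j) at s
    have hpre := ha.2.2.2.2 s has (lt_trans hsb' hbj)
    simp only [Finset.card_empty] at hsplitT
    omega
  rcases lt_trichotomy i p with h | h | h
  · exact (key i p hm hm' h).elim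
  · exact h
  · exact (key p i hm' hm h).elim

lemma upsBefore_succ {l : DWeight k} {i j : Fin k} (hU : unmatchedUp l i) (hij : i < j)
    (hno : ∀ t, i < t → t < j → ¬ unmatchedUp l t) :
    upsBefore l j = upsBefore l i + 1 := by
  unfold upsBefore
  have : (Finset.univ.filter fun t : Fin k => t < j ∧ unmatchedUp l t)
      = insert i (Finset.univ.filter fun t : Fin k => t < i ∧ unmatchedUp l t) := by
    ext t
    simp only [Finset.mem_filter, Finset.mem_univ, true_and, Finset.mem_insert]
    constructor
    · rintro ⟨htj, hUt⟩
      rcases lt_trichotomy t i with h | h | h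
      · exact Or.inr ⟨h, hUt⟩
      · exact Or.inl h
      · exact (hno t h htj hUt).elim
    · rintro (h | ⟨h, hUt⟩)
      · exact ⟨h ▸ hij, h ▸ hU⟩
      · exact ⟨lt_trans h hij, hUt⟩
  rw [this, Finset.card_insert_of_notMem (by simp)]

lemma dCup_right_unique {l : DWeight k} {i j j' : Fin k}
    (h : dCup l i j) (h' : dCup l i j') : j = j' := by
  rcases lt_trichotomy j j' with hlt | heq | hlt
  · exact (h'.2.2.2.1 j h.1 hlt h.2.2.1).elim
  · exact heq
  · exact (h.2.2.2.1 j' h'.1 hlt h'.2.2.1).elim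

lemma dCup_left_unique {l : DWeight k} {i p j : Fin k}
    (h : dCup l i j) (h' : dCup l p j) : i = p := by
  rcases lt_trichotomy i p with hlt | heq | hlt
  · exact (h.2.2.2.1 p hlt h'.1 h'.2.1).elim
  · exact heq
  · exact (h'.2.2.2.1 i hlt h.1 h.2.1).elim

/-- Every position of the diagram lies on a cup or a ray. -/
lemma position_partition (l : DWeight k) (t : Fin k) :
    (∃ q, uCup l t q) ∨ (∃ p, uCup l p t) ∨ (∃ q, dCup l t q) ∨ (∃ p, dCup l p t) ∨
      uRay l t ∨ dRay l t := by
  cases hlt : l t with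
  | false =>
    by_cases h : ∃ q, matched l t q
    · exact Or.inl h
    · exact Or.inr (Or.inr (Or.inr (Or.inr (Or.inl ⟨hlt, h⟩))))
  | true =>
    by_cases h : ∃ p, matched l p t
    · exact Or.inr (Or.inl h)
    · have hU : unmatchedUp l t := ⟨hlt, h⟩
      by_cases hev : Even (upsBefore l t)
      · -- even: next unmatched ∧ gives a dotted cup, or dotted ray
        by_cases hnext : (Finset.univ.filter fun q : Fin k => t < q ∧ unmatchedUp l q).Nonempty
        · set q := Finset.min' _ hnext with hq
          have hqmem := Finset.min'_mem _ hnext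
          simp only [Finset.mem_filter, Finset.mem_univ, true_and] at hqmem
          refine Or.inr (Or.inr (Or.inl ⟨q, hqmem.1, hU, hqmem.2, fun s hts hsq hUs => ?_, hev⟩))
          have : q ≤ s := Finset.min'_le _ s (by simp [hts, hUs])
          exact absurd hsq (not_lt_of_ge this)
        · refine Or.inr (Or.inr (Or.inr (Or.inr (Or.inr ⟨hU, hev, fun s hts hUs => ?_⟩))))
          exact hnext ⟨s, by simp [hts, hUs]⟩
      · -- odd: previous unmatched ∧ gives a dotted cup (with `t` the right end)
        have hne : (Finset.univ.filter fun p : Fin k => p < t ∧ unmatchedUp l p).Nonempty := by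
          rw [← Finset.card_pos]
          have : upsBefore l t ≠ 0 := by
            intro h0
            rw [h0] at hev
            exact hev Even.zero
          unfold upsBefore at this
          omega
        set p := Finset.max' _ hne with hp
        have hpmem := Finset.max'_mem _ hne
        simp only [Finset.mem_filter, Finset.mem_univ, true_and] at hpmem
        have hnob : ∀ s, p < s → s < t → ¬ unmatchedUp l s := by
          intro s hps hst hUs
          have : s ≤ p := Finset.le_max' _ s (by simp [hst, hUs])
          exact absurd hps (not_lt_of_ge this)
        have hcount := upsBefore_succ hpmem.2 hpmem.1 hnob
        have hevp : Even (upsBefore l p) := by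
          by_contra hodd
          exact hev (hcount ▸ Nat.even_add_one.mpr hodd)
        exact Or.inr (Or.inr (Or.inr (Or.inl ⟨p, hpmem.1, hpmem.2, hU, hnob, hevp⟩)))

end Uniqueness

end TypeD


namespace TypeD

lemma statement11 (k : ℕ) (l m : TypeD.DWeight k) :
    TypeD.lambdaPair l m ↔
      (TypeD.sub l m ∧ TypeD.degCup l m = 1 ∧ TypeD.bruhatLT l m) := by
  constructor
  · rintro ⟨i, j, hcup, hmi, hmj, hmt⟩
    rcases hcup with hcup | hcup
    · -- undotted cup flipped
      have hij : i < j := hcup.1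
      have hli : l i = false := hcup.2.1
      have hlj : l j = true := hcup.2.2.1
      have hmi' : m i = true := by rw [hmi, hli]; rfl
      have hmj' : m j = false := by rw [hmj, hlj]; rfl
      refine ⟨⟨?_, ?_, ?_, ?_⟩, ?_, ?_⟩
      · -- undotted cups oriented
        intro p q hpq
        by_cases hpi : p = i
        · subst hpi
          have hqj : q = j := matched_right_unique hpq hcup
          subst hqj
          rw [hmi', hmj']; simp
        · have hqi : q ≠ i := fun h => by
            rw [h] at hpq; rw [hpq.2.2.1] at hli; exact Bool.noConfusion hli
          have hpj : p ≠ j := fun h => by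
            rw [h] at hpq; rw [hpq.2.1] at hlj; exact Bool.noConfusion hlj
          have hqj : q ≠ j := fun h => hpi (matched_left_unique hcup (h ▸ hpq)).symm
          rw [hmt p hpi hpj, hmt q hqi hqj, hpq.2.1, hpq.2.2.1]; simp
      · -- dotted cups oriented
        intro p q hpq
        have hpi : p ≠ i := fun h => by
          rw [h] at hpq; rw [hpq.2.1.1] at hli; exact Bool.noConfusion hli
        have hqi : q ≠ i := fun h => by
          rw [h] at hpq; rw [hpq.2.2.1.1] at hli; exact Bool.noConfusion hli
        have hpj : p ≠ j := fun h => (h ▸ hpq).2.1.2 ⟨i, hcup⟩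
        have hqj : q ≠ j := fun h => (h ▸ hpq).2.2.1.2 ⟨i, hcup⟩
        rw [hmt p hpi hpj, hmt q hqi hqj, hpq.2.1.1, hpq.2.2.1.1]
      · -- undotted rays oriented
        intro p hp
        have hpi : p ≠ i := fun h => (h ▸ hp).2 ⟨j, hcup⟩
        have hpj : p ≠ j := fun h => by
          rw [h] at hp; rw [hp.1] at hlj; exact Bool.noConfusion hlj
        rw [hmt p hpi hpj]; exact hp.1
      · -- dotted rays oriented
        intro p hp
        have hpi : p ≠ i := fun h => by
          rw [h] at hp; rw [hp.1.1] at hli; exact Bool.noConfusion hli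
        have hpj : p ≠ j := fun h => (h ▸ hp).1.2 ⟨i, hcup⟩
        rw [hmt p hpi hpj]; exact hp.1.1
      · -- degree one
        rw [degCup, Finset.card_eq_one]
        refine ⟨(i, j), ?_⟩
        rw [Finset.eq_singleton_iff_unique_mem]
        constructor
        · simp only [Finset.mem_filter, Finset.mem_univ, true_and]
          exact Or.inl ⟨hcup, hmi'⟩
        · rintro ⟨p, q⟩ hmem
          simp only [Finset.mem_filter, Finset.mem_univ, true_and] at hmem
          rcases hmem with ⟨hpq, hmp⟩ | ⟨hpq, hmp⟩
          · have hpj : p ≠ j := fun h => by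
              rw [h] at hpq; rw [hpq.2.1] at hlj; exact Bool.noConfusion hlj
            have hpi : p = i := by
              by_contra hpi
              rw [hmt p hpi hpj, hpq.2.1] at hmp; exact Bool.noConfusion hmp
            subst hpi
            have hqj : q = j := matched_right_unique hpq hcup
            rw [hqj]
          · exfalso
            have hpi : p ≠ i := fun h => by
              rw [h] at hpq; rw [hpq.2.1.1] at hli; exact Bool.noConfusion hli
            have hpj : p ≠ j := fun h => (h ▸ hpq).2.1.2 ⟨i, hcup⟩
            rw [hmt p hpi hpj, hpq.2.1.1] at hmp; exact Bool.noConfusion hmp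
      · -- Bruhat
        exact swapE (j : ℕ) m l i j (Nat.sub_le _ _) hij hmi' hmj' hli hlj
          (fun t h1 h2 => (hmt t h1 h2).symm)
    · -- dotted cup flipped
      have hij : i < j := hcup.1
      have hUi : unmatchedUp l i := hcup.2.1
      have hUj : unmatchedUp l j := hcup.2.2.1
      have hno := hcup.2.2.2.1
      have hev := hcup.2.2.2.2
      have hli : l i = true := hUi.1
      have hlj : l j = true := hUj.1
      have hmi' : m i = false := by rw [hmi, hli]; rfl
      have hmj' : m j = false := by rw [hmj, hlj]; rfl
      have hoddj : ¬ Even (upsBefore l j) := by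
        rw [upsBefore_succ hUi hij hno]
        exact fun h => (Nat.even_add_one.mp h) hev
      refine ⟨⟨?_, ?_, ?_, ?_⟩, ?_, ?_⟩
      · -- undotted cups oriented
        intro p q hpq
        have hpi : p ≠ i := fun h => by
          rw [h] at hpq; rw [hpq.2.1] at hli; exact Bool.noConfusion hli
        have hpj : p ≠ j := fun h => by
          rw [h] at hpq; rw [hpq.2.1] at hlj; exact Bool.noConfusion hlj
        have hqi : q ≠ i := fun h => hUi.2 ⟨p, h ▸ hpq⟩
        have hqj : q ≠ j := fun h => hUj.2 ⟨p, h ▸ hpq⟩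
        rw [hmt p hpi hpj, hmt q hqi hqj, hpq.2.1, hpq.2.2.1]; simp
      · -- dotted cups oriented
        intro p q hpq
        have hpj : p ≠ j := fun h => hoddj (h ▸ hpq).2.2.2.2
        have hqi : q ≠ i := fun h => by
          have hpq' : dCup l p i := h ▸ hpq
          have : upsBefore l i = upsBefore l p + 1 :=
            upsBefore_succ hpq'.2.1 hpq'.1 hpq'.2.2.2.1
          rw [this] at hev
          exact (Nat.even_add_one.mp hev) hpq'.2.2.2.2
        by_cases hpi : p = i
        · subst hpi
          have hqj : q = j := dCup_right_unique hpq hcup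
          subst hqj
          rw [hmi', hmj']
        · have hqj : q ≠ j := fun h => hpi (dCup_left_unique hcup (h ▸ hpq)).symm
          rw [hmt p hpi hpj, hmt q hqi hqj, hpq.2.1.1, hpq.2.2.1.1]
      · -- undotted rays oriented
        intro p hp
        have hpi : p ≠ i := fun h => by
          rw [h] at hp; rw [hp.1] at hli; exact Bool.noConfusion hli
        have hpj : p ≠ j := fun h => by
          rw [h] at hp; rw [hp.1] at hlj; exact Bool.noConfusion hlj
        rw [hmt p hpi hpj]; exact hp.1
      · -- dotted rays oriented
        intro p hp
        have hpi : p ≠ i := fun h => (h ▸ hp).2.2 j hij hUj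
        have hpj : p ≠ j := fun h => hoddj (h ▸ hp).2.1
        rw [hmt p hpi hpj]; exact hp.1.1
      · -- degree one
        rw [degCup, Finset.card_eq_one]
        refine ⟨(i, j), ?_⟩
        rw [Finset.eq_singleton_iff_unique_mem]
        constructor
        · simp only [Finset.mem_filter, Finset.mem_univ, true_and]
          exact Or.inr ⟨hcup, hmi'⟩
        · rintro ⟨p, q⟩ hmem
          simp only [Finset.mem_filter, Finset.mem_univ, true_and] at hmem
          rcases hmem with ⟨hpq, hmp⟩ | ⟨hpq, hmp⟩
          · exfalso
            have hpi : p ≠ i := fun h => by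
              rw [h] at hpq; rw [hpq.2.1] at hli; exact Bool.noConfusion hli
            have hpj : p ≠ j := fun h => by
              rw [h] at hpq; rw [hpq.2.1] at hlj; exact Bool.noConfusion hlj
            rw [hmt p hpi hpj, hpq.2.1] at hmp; exact Bool.noConfusion hmp
          · have hpj : p ≠ j := fun h => hoddj (h ▸ hpq).2.2.2.2
            have hpi : p = i := by
              by_contra hpi
              rw [hmt p hpi hpj, hpq.2.1.1] at hmp; exact Bool.noConfusion hmp
            subst hpi
            have hqj : q = j := dCup_right_unique hpq hcup
            rw [hqj]
      · -- Bruhat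
        exact flipTwo (j : ℕ) l m i j le_rfl hij hli hlj hmi' hmj' hmt
  · rintro ⟨hsub, hdeg, -⟩
    rw [degCup, Finset.card_eq_one] at hdeg
    obtain ⟨⟨i, j⟩, hset⟩ := hdeg
    have hmem : ((i, j) : Fin k × Fin k) ∈
        (Finset.univ : Finset (Fin k × Fin k)).filter fun p =>
          (uCup l p.1 p.2 ∧ m p.1 = true) ∨ (dCup l p.1 p.2 ∧ m p.1 = false) := by
      rw [hset]; exact Finset.mem_singleton_self _
    have huniq : ∀ p q : Fin k,
        ((uCup l p q ∧ m p = true) ∨ (dCup l p q ∧ m p = false)) → p = i ∧ q = j := by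
      intro p q h
      have : ((p, q) : Fin k × Fin k) ∈
          (Finset.univ : Finset (Fin k × Fin k)).filter fun r =>
            (uCup l r.1 r.2 ∧ m r.1 = true) ∨ (dCup l r.1 r.2 ∧ m r.1 = false) := by
        simp only [Finset.mem_filter, Finset.mem_univ, true_and]; exact h
      rw [hset, Finset.mem_singleton] at this
      exact ⟨congrArg Prod.fst this, congrArg Prod.snd this⟩
    simp only [Finset.mem_filter, Finset.mem_univ, true_and] at hmem
    have hlast : ∀ t, t ≠ i → t ≠ j → m t = l t := by
      intro t ht1 ht2
      rcases position_partition l t with ⟨q, hq⟩ | ⟨p, hp⟩ | ⟨q, hq⟩ | ⟨p, hp⟩ | h | h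
      · have hmt : m t ≠ true := fun h => ht1 (huniq t q (Or.inl ⟨hq, h⟩)).1
        rw [hq.2.1]
        exact Bool.not_eq_true _ ▸ hmt  -- m t = false
      · have hmp : m p ≠ true := fun h => ht2 (huniq p t (Or.inl ⟨hp, h⟩)).2
        have hmp' : m p = false := by
          cases hv : m p with
          | true => exact (hmp hv).elim
          | false => rfl
        have := hsub.1 p t hp
        rw [hmp'] at this
        rw [hp.2.2.1]
        cases hv : m t with
        | true => rfl
        | false => exact absurd hv.symm this
      · have hmt : m t ≠ false := fun h => ht1 (huniq t q (Or.inr ⟨hq, h⟩)).1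
        rw [hq.2.1.1]
        cases hv : m t with
        | true => rfl
        | false => exact (hmt hv).elim
      · have hmp : m p ≠ false := fun h => ht2 (huniq p t (Or.inr ⟨hp, h⟩)).2
        have hmp' : m p = true := by
          cases hv : m p with
          | false => exact (hmp hv).elim
          | true => rfl
        have := hsub.2.1 p t hp
        rw [hmp'] at this
        rw [hp.2.2.1.1]
        exact this.symm
      · rw [hsub.2.2.1 t h, h.1]
      · rw [hsub.2.2.2 t h, h.1.1]
    rcases hmem with ⟨hcup, hmiT⟩ | ⟨hcup, hmiF⟩
    · refine ⟨i, j, Or.inl hcup, ?_, ?_, hlast⟩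
      · rw [hcup.2.1, hmiT]; rfl
      · have := hsub.1 i j hcup
        rw [hmiT] at this
        have hmj : m j = false := by
          cases hv : m j with
          | true => exact absurd hv.symm this
          | false => rfl
        rw [hcup.2.2.1, hmj]; rfl
    · refine ⟨i, j, Or.inr hcup, ?_, ?_, hlast⟩
      · rw [hcup.2.1.1, hmiF]; rfl
      · have := hsub.2.1 i j hcup
        rw [hmiF] at this
        rw [hcup.2.2.1.1, this.symm]; rfl

end TypeD

/-! STATEMENT 11: `λ → μ` (i.e. `μ` arises from `λ` by a `λ`-pair) if and only
if the oriented cup diagram `λ̲μ` has degree exactly `1` and `λ < μ` in the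
Bruhat order.  (That `λ̲μ` is an oriented cup diagram is part of the right-hand
side.) -/
theorem lambdaPair_iff_degree_one (k : ℕ) (l m : TypeD.DWeight k) :
    TypeD.lambdaPair l m ↔
      (TypeD.sub l m ∧ TypeD.degCup l m = 1 ∧ TypeD.bruhatLT l m) :=
  TypeD.statement11 k l m
end

section
/- The assignment λ ↦ wt(λ), defined by b_i = max{λ_i - m + n - i + 1, 0} for 1 ≤ i ≤ n and a_j = max{λ^t_j - n + m - j, 0} for 1 ≤ j ≤ m, produces from any (n,m)-hook partition λ sequences with a_1 > a_2 > ... > a_{m-l-1} ≥ a_{m-l} = ... = a_m = 0 and b_1 > ... > b_{n-l-1} > b_{n-l} = ... = b_n = 0 for some l ≥ 0 (strict decrease among nonzero entries, and the dominance matching condition between the numbers of zero a's and zero b's); this defines an injection from (n,m)-hook partitions into dominant weights of sosp(2m|2n), missing exactly the tailless dominant weights with a_m < 0. -/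
open scoped Classical

/-! STATEMENT 18: The assignment `λ ↦ wt(λ)`, with
`b_i = max{λ_i - m + n - i + 1, 0}` (`1 ≤ i ≤ n`) and
`a_j = max{λ^t_j - n + m - j, 0}` (`1 ≤ j ≤ m`), sends an `(n,m)`-hook
partition `λ` to a dominant weight of `𝔰𝔬𝔰𝔭(2m|2n)`: the resulting sequences
decrease strictly among nonzero entries, zeros propagate to the right, and
the dominance matching conditions `a_{m-s} > 0 ⇒ b_{n-s} > 0` and
`a_{m-r} = 0 ⇒ b_{n-r+1} = 0` hold (equivalently, the numbers of zero `a`'s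
and zero `b`'s satisfy `#0(b) ≤ #0(a) ≤ #0(b) + 1`).  This defines an
injection from `(n,m)`-hook partitions into the dominant weights of
`𝔰𝔬𝔰𝔭(2m|2n)`, whose image misses exactly the tailless dominant weights with
`a_m < 0`. -/

/-- `p` is a partition (weakly decreasing, finitely supported; 1-indexed). -/
def IsPartition (p : ℕ → ℕ) : Prop :=
  (∀ i, 1 ≤ i → p (i + 1) ≤ p i) ∧ ∃ N, ∀ i, N ≤ i → p i = 0

/-- `p` is an `(n,m)`-hook partition: `λ_{n+1} ≤ m`. -/
def IsHook (m n : ℕ) (p : ℕ → ℕ) : Prop := IsPartition p ∧ p (n + 1) ≤ m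

/-- the transpose partition, `λ^t_j = #{i ≥ 1 : λ_i ≥ j}`. -/
noncomputable def transp (p : ℕ → ℕ) (j : ℕ) : ℕ := {i : ℕ | 1 ≤ i ∧ j ≤ p i}.ncard

/-- `a_j = max{λ^t_j - n + m - j, 0}`. -/
noncomputable def aseq (m n : ℕ) (p : ℕ → ℕ) (j : ℕ) : ℤ :=
  max ((transp p j : ℤ) - n + m - j) 0

/-- `b_i = max{λ_i - m + n - i + 1, 0}`. -/
noncomputable def bseq (m n : ℕ) (p : ℕ → ℕ) (i : ℕ) : ℤ :=
  max ((p i : ℤ) - m + n - i + 1) 0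

/-- number of zero entries among the first `m` entries (1-indexed). -/
noncomputable def zcount (m : ℕ) (A : ℕ → ℤ) : ℕ :=
  ((Finset.Icc 1 m).filter fun j => A j = 0).card

/-- dominance condition (i) for `𝔰𝔬𝔰𝔭(2m|2n)`: a tailless weight, i.e.
`a_1 > a_2 > ⋯ > a_{m-1} > |a_m|` and `b_1 > b_2 > ⋯ > b_n > 0`. -/
def Tailless (m n : ℕ) (A B : ℕ → ℤ) : Prop :=
  (∀ j, 1 ≤ j → j + 1 < m → A (j + 1) < A j) ∧
  (2 ≤ m → |A m| < A (m - 1)) ∧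
  (∀ i, 1 ≤ i → i + 1 ≤ n → B (i + 1) < B i) ∧
  (∀ i, 1 ≤ i → i ≤ n → 0 < B i)

/-- dominance condition (ii) for `𝔰𝔬𝔰𝔭(2m|2n)`:
`a_1 > ⋯ > a_{m-l-1} ≥ a_{m-l} = ⋯ = a_m = 0` and
`b_1 > ⋯ > b_{n-l-1} > b_{n-l} = ⋯ = b_n = 0` for some `l ≥ 0`, i.e.
nonnegative entries, strict decrease among nonzero entries, zeros propagating
to the right, `a_m = 0 = b_n`, and the matching condition
`#0(b) ≤ #0(a) ≤ #0(b) + 1` between the numbers of zero `a`'s and zero `b`'s. -/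
def DominantWithTail (m n : ℕ) (A B : ℕ → ℤ) : Prop :=
  (∀ j, 1 ≤ j → j ≤ m → 0 ≤ A j) ∧
  (∀ i, 1 ≤ i → i ≤ n → 0 ≤ B i) ∧
  (∀ j, 1 ≤ j → j + 1 ≤ m →
    (A (j + 1) ≠ 0 → A (j + 1) < A j) ∧ (A j = 0 → A (j + 1) = 0)) ∧
  (∀ i, 1 ≤ i → i + 1 ≤ n →
    (B i ≠ 0 → B (i + 1) < B i) ∧ (B i = 0 → B (i + 1) = 0)) ∧
  (1 ≤ m → A m = 0) ∧ (1 ≤ n → B n = 0) ∧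
  zcount n B ≤ zcount m A ∧ zcount m A ≤ zcount n B + 1

/-- a dominant integral weight of `𝔰𝔬𝔰𝔭(2m|2n)` (written via `λ + ρ = (a, b)`). -/
def Dominant (m n : ℕ) (A B : ℕ → ℤ) : Prop :=
  Tailless m n A B ∨ DominantWithTail m n A B

section Helpers

variable {p : ℕ → ℕ} {m n : ℕ}

lemma max_ne_zero_iff {X : ℤ} : max X 0 ≠ 0 ↔ 0 < X := by
  rcases le_total X 0 with h | h
  · rw [max_eq_right h]; omega
  · rw [max_eq_left h]; omega

lemma max_eq_zero_iff' {X : ℤ} : max X 0 = 0 ↔ X ≤ 0 := by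
  rcases le_total X 0 with h | h
  · rw [max_eq_right h]; omega
  · rw [max_eq_left h]; omega

lemma part_mono (hp : IsPartition p) : ∀ i i', 1 ≤ i → i ≤ i' → p i' ≤ p i := by
  intro i i' hi hii
  induction i', hii using Nat.le_induction with
  | base => exact le_rfl
  | succ k hk ih => exact le_trans (hp.1 k (le_trans hi hk)) ih

lemma transp_finite (hp : IsPartition p) {j : ℕ} (hj : 1 ≤ j) :
    {i : ℕ | 1 ≤ i ∧ j ≤ p i}.Finite := by
  obtain ⟨N, hN⟩ := hp.2
  apply Set.Finite.subset (Set.finite_Icc 1 N)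
  rintro i ⟨hi1, hip⟩
  refine ⟨hi1, ?_⟩
  by_contra h
  have := hN i (by omega)
  omega

lemma le_transp_iff (hp : IsPartition p) {i j : ℕ} (hi : 1 ≤ i) (hj : 1 ≤ j) :
    i ≤ transp p j ↔ j ≤ p i := by
  constructor
  · intro h
    by_contra hpi
    have hsub : {k : ℕ | 1 ≤ k ∧ j ≤ p k} ⊆ Set.Icc 1 (i - 1) := by
      rintro k ⟨hk1, hkp⟩
      refine ⟨hk1, ?_⟩
      by_contra hk
      have := part_mono hp i k hi (by omega)
      omega
    have hle := Set.ncard_le_ncard hsub (Set.finite_Icc _ _)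
    rw [← Finset.coe_Icc, Set.ncard_coe_finset, Nat.card_Icc] at hle
    unfold transp at h
    omega
  · intro h
    have hsub : (Set.Icc 1 i) ⊆ {k : ℕ | 1 ≤ k ∧ j ≤ p k} := by
      rintro k ⟨hk1, hk2⟩
      exact ⟨hk1, le_trans h (part_mono hp k i hk1 hk2)⟩
    have hle := Set.ncard_le_ncard hsub (transp_finite hp hj)
    rw [← Finset.coe_Icc, Set.ncard_coe_finset, Nat.card_Icc] at hle
    unfold transp
    omega

lemma transp_succ_le (hp : IsPartition p) {j : ℕ} (hj : 1 ≤ j) :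
    transp p (j + 1) ≤ transp p j := by
  apply Set.ncard_le_ncard _ (transp_finite hp hj)
  rintro k ⟨hk1, hk2⟩
  exact ⟨hk1, by omega⟩

lemma transp_eq (hp : IsPartition p) {j K : ℕ} (hj : 1 ≤ j)
    (hK1 : 1 ≤ K → j ≤ p K) (hK2 : p (K + 1) < j) : transp p j = K := by
  have hset : {i : ℕ | 1 ≤ i ∧ j ≤ p i} = Set.Icc 1 K := by
    ext k
    simp only [Set.mem_setOf_eq, Set.mem_Icc]
    constructor
    · rintro ⟨hk1, hk2⟩
      refine ⟨hk1, ?_⟩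
      by_contra hk
      have := part_mono hp (K + 1) k (by omega) (by omega)
      omega
    · rintro ⟨hk1, hk2⟩
      exact ⟨hk1, le_trans (hK1 (by omega)) (part_mono hp k K hk1 hk2)⟩
  unfold transp
  rw [hset, ← Finset.coe_Icc, Set.ncard_coe_finset, Nat.card_Icc]
  omega

lemma transp_le (hp : IsPartition p) {j K : ℕ} (hj : 1 ≤ j)
    (h : ∀ k, K < k → p k < j) : transp p j ≤ K := by
  have hsub : {i : ℕ | 1 ≤ i ∧ j ≤ p i} ⊆ Set.Icc 1 K := by
    rintro k ⟨hk1, hk2⟩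
    refine ⟨hk1, ?_⟩
    by_contra hk
    have := h k (by omega)
    omega
  have := Set.ncard_le_ncard hsub (Set.finite_Icc _ _)
  rw [← Finset.coe_Icc, Set.ncard_coe_finset, Nat.card_Icc] at this
  unfold transp
  omega

lemma chain_le {F : ℕ → ℤ} {L : ℕ}
    (h : ∀ j, 1 ≤ j → j + 1 ≤ L → F (j + 1) < F j) :
    ∀ j k, 1 ≤ j → j ≤ k → k ≤ L → F k + (k : ℤ) - j ≤ F j := by
  intro j k hj hjk hkL
  induction k, hjk using Nat.le_induction with
  | base => omega
  | succ k hk ih =>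
    have h1 := h k (by omega) (by omega)
    have h2 := ih (by omega)
    push_cast at h2 ⊢
    omega

lemma seg_char {A : ℕ → ℤ} {m : ℕ}
    (hprop : ∀ j, 1 ≤ j → j + 1 ≤ m → A j = 0 → A (j + 1) = 0) :
    ∃ la, la ≤ m ∧ (∀ j, 1 ≤ j → j ≤ m → (A j ≠ 0 ↔ j ≤ la)) ∧
      ((Finset.Icc 1 m).filter fun j => A j = 0).card = m - la := by
  have hup : ∀ j j', 1 ≤ j → j ≤ j' → j' ≤ m → A j = 0 → A j' = 0 := by
    intro j j' hj hjj
    induction j', hjj using Nat.le_induction with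
    | base => exact fun _ h => h
    | succ k hk ih => exact fun hk1 h0 => hprop k (by omega) (by omega) (ih (by omega) h0)
  refine ⟨((Finset.Icc 1 m).filter fun j => A j ≠ 0).card,
    le_trans (Finset.card_filter_le _ _) (by simp), ?_, ?_⟩
  · intro j hj hjm
    constructor
    · intro hA
      have hsub : Finset.Icc 1 j ⊆ (Finset.Icc 1 m).filter fun j => A j ≠ 0 := by
        intro k hk
        simp only [Finset.mem_Icc, Finset.mem_filter] at *
        exact ⟨⟨hk.1, by omega⟩, fun h0 => hA (hup k j hk.1 hk.2 hjm h0)⟩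
      have := Finset.card_le_card hsub
      rw [Nat.card_Icc] at this
      omega
    · intro hle hA0
      have hsub : ((Finset.Icc 1 m).filter fun j => A j ≠ 0) ⊆ Finset.Icc 1 (j - 1) := by
        intro k hk
        simp only [Finset.mem_Icc, Finset.mem_filter] at *
        refine ⟨hk.1.1, ?_⟩
        by_contra hk2
        exact hk.2 (hup j k hj (by omega) hk.1.2 hA0)
      have := Finset.card_le_card hsub
      rw [Nat.card_Icc] at this
      omega
  · have h := Finset.card_filter_add_card_filter_not (s := Finset.Icc 1 m)
      (p := fun j => A j = 0)
    simp only [ne_eq]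
    rw [Nat.card_Icc] at h
    omega

end Helpers

section Part1

variable {p : ℕ → ℕ} {m n : ℕ}

lemma aseq_pair (hp : IsPartition p) {j : ℕ} (hj : 1 ≤ j) :
    (aseq m n p (j + 1) ≠ 0 → aseq m n p (j + 1) < aseq m n p j) ∧
    (aseq m n p j = 0 → aseq m n p (j + 1) = 0) := by
  have ht := transp_succ_le (p := p) hp hj
  constructor
  · intro h
    rw [aseq, max_ne_zero_iff] at h
    have h1 : aseq m n p (j + 1) = (transp p (j + 1) : ℤ) - n + m - (↑(j + 1) : ℤ) := by
      rw [aseq, max_eq_left (le_of_lt h)]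
    have h2 : ((transp p j : ℤ) - n + m - j) ≤ aseq m n p j := le_max_left _ _
    rw [h1]
    push_cast at *
    omega
  · intro h
    rw [aseq, max_eq_zero_iff'] at h ⊢
    push_cast at *
    omega

lemma bseq_pair (hp : IsPartition p) {i : ℕ} (hi : 1 ≤ i) :
    (bseq m n p i ≠ 0 → bseq m n p (i + 1) < bseq m n p i) ∧
    (bseq m n p i = 0 → bseq m n p (i + 1) = 0) := by
  have ht := hp.1 i hi
  constructor
  · intro h
    rw [bseq, max_ne_zero_iff] at h
    have h1 : bseq m n p (i + 1) ≤ max ((p (i+1) : ℤ) - m + n - (↑(i + 1) : ℤ) + 1) 0 :=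
      le_of_eq (by rw [bseq])
    have h2 : bseq m n p i = (p i : ℤ) - m + n - i + 1 := by
      rw [bseq, max_eq_left (le_of_lt h)]
    have h3 : max ((p (i+1) : ℤ) - m + n - (↑(i + 1) : ℤ) + 1) 0 ≤
        max ((p i : ℤ) - m + n - i) 0 := by
      apply max_le _ (le_max_right _ _)
      apply le_max_of_le_left
      push_cast
      omega
    rw [h2]
    have h4 := le_trans h1 h3
    have h5 : max ((p i : ℤ) - m + n - i) 0 ≤ max ((p i : ℤ) - m + n - i) (( p i : ℤ) - m + n - i) := by
      apply max_le (le_max_left _ _)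
      apply le_max_of_le_left
      omega
    simp at h5
    omega
  · intro h
    rw [bseq, max_eq_zero_iff'] at h ⊢
    push_cast at *
    omega

lemma s_cond (hp : IsPartition p) {s : ℕ} (hsm : s < m) (hsn : s < n)
    (h : aseq m n p (m - s) ≠ 0) : bseq m n p (n - s) ≠ 0 := by
  rw [aseq, max_ne_zero_iff] at h
  have h1 : n - s + 1 ≤ transp p (m - s) := by omega
  rw [le_transp_iff hp (by omega) (by omega)] at h1
  have h2 : p (n - s + 1) ≤ p (n - s) := part_mono hp _ _ (by omega) (by omega)
  rw [bseq, max_ne_zero_iff]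
  omega

lemma r_cond (hp : IsPartition p) {r : ℕ} (hr : 1 ≤ r) (hrm : r < m) (hrn : r ≤ n)
    (h : aseq m n p (m - r) = 0) : bseq m n p (n - r + 1) = 0 := by
  rw [aseq, max_eq_zero_iff'] at h
  have h1 : ¬ (n - r + 1 ≤ transp p (m - r)) := by omega
  rw [le_transp_iff hp (by omega) (by omega)] at h1
  rw [bseq, max_eq_zero_iff']
  omega

lemma bseq_auto (hmn : m + 1 ≤ n) : bseq m n p (n - m) ≠ 0 := by
  rw [bseq, max_ne_zero_iff]
  omega

lemma aseq_auto (hmn : n + 2 ≤ m) : aseq m n p (m - n - 1) ≠ 0 := by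
  rw [aseq, max_ne_zero_iff]
  omega

end Part1

section Part1b

variable {p : ℕ → ℕ} {m n : ℕ}

lemma part1_main (hm : 1 ≤ m) (hn : 1 ≤ n) (hp : IsHook m n p) :
    (∀ j, 1 ≤ j → j + 1 ≤ m →
      (aseq m n p (j + 1) ≠ 0 → aseq m n p (j + 1) < aseq m n p j) ∧
      (aseq m n p j = 0 → aseq m n p (j + 1) = 0)) ∧
    (∀ i, 1 ≤ i → i + 1 ≤ n →
      (bseq m n p i ≠ 0 → bseq m n p (i + 1) < bseq m n p i) ∧
      (bseq m n p i = 0 → bseq m n p (i + 1) = 0)) ∧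
    (∀ s, s < m → s < n → aseq m n p (m - s) ≠ 0 → bseq m n p (n - s) ≠ 0) ∧
    (∀ r, 1 ≤ r → r < m → r ≤ n →
      aseq m n p (m - r) = 0 → bseq m n p (n - r + 1) = 0) ∧
    zcount n (bseq m n p) ≤ zcount m (aseq m n p) ∧
    zcount m (aseq m n p) ≤ zcount n (bseq m n p) + 1 ∧
    Dominant m n (aseq m n p) (bseq m n p) := by
  obtain ⟨hpart, hhook⟩ := hp
  obtain ⟨la, hlam, hachar, hacard⟩ :=
    seg_char (A := aseq m n p) (m := m) (fun j hj hjm h0 => (aseq_pair hpart hj).2 h0)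
  obtain ⟨lb, hlbn, hbchar, hbcard⟩ :=
    seg_char (A := bseq m n p) (m := n) (fun i hi hin h0 => (bseq_pair hpart hi).2 h0)
  have hZa : zcount m (aseq m n p) = m - la := hacard
  have hZb : zcount n (bseq m n p) = n - lb := hbcard
  have hZba : n - lb ≤ m - la := by
    by_contra hcon
    push_neg at hcon
    rcases Nat.eq_zero_or_pos la with h0 | hpos
    · have hb := bseq_auto (p := p) (m := m) (n := n) (by omega)
      have := (hbchar (n - m) (by omega) (by omega)).mp hb
      omega
    · have ha : aseq m n p (m - (m - la)) ≠ 0 := by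
        rw [show m - (m - la) = la by omega]
        exact (hachar la hpos hlam).mpr le_rfl
      have hb := s_cond hpart (by omega) (by omega) ha
      have := (hbchar (n - (m - la)) (by omega) (by omega)).mp hb
      omega
  have hZab : m - la ≤ n - lb + 1 := by
    by_contra hcon
    push_neg at hcon
    rcases Nat.eq_zero_or_pos lb with h0 | hpos
    · have ha := aseq_auto (p := p) (m := m) (n := n) (by omega)
      have := (hachar (m - n - 1) (by omega) (by omega)).mp ha
      omega
    · have ha0 : aseq m n p (m - (n - lb + 1)) = 0 := by
        by_contra hne
        have := (hachar _ (by omega) (by omega)).mp hne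
        omega
      have hb0 := r_cond hpart (r := n - lb + 1) (by omega) (by omega) (by omega) ha0
      rw [show n - (n - lb + 1) + 1 = lb by omega] at hb0
      exact absurd hb0 ((hbchar lb (by omega) (by omega)).mpr le_rfl)
  refine ⟨fun j hj _ => aseq_pair hpart hj, fun i hi _ => bseq_pair hpart hi,
    fun s hs1 hs2 => s_cond hpart hs1 hs2,
    fun r h1 h2 h3 => r_cond hpart h1 h2 h3, by omega, by omega, ?_⟩
  by_cases hbn : bseq m n p n = 0
  · right
    refine ⟨fun j _ _ => le_max_right _ _, fun i _ _ => le_max_right _ _,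
      fun j hj hjm => aseq_pair hpart hj, fun i hi hin => bseq_pair hpart hi,
      fun _ => ?_, fun _ => hbn, by omega, by omega⟩
    by_contra hne
    have ha : aseq m n p (m - 0) ≠ 0 := by rwa [Nat.sub_zero]
    have hb := s_cond hpart (by omega) (by omega) ha
    rw [Nat.sub_zero] at hb
    exact hb hbn
  · left
    have hnlb : n ≤ lb := (hbchar n hn le_rfl).mp hbn
    have ballnz : ∀ i, 1 ≤ i → i ≤ n → bseq m n p i ≠ 0 := by
      intro i hi hin
      exact (hbchar i hi hin).mpr (by omega)
    have am1 : 2 ≤ m → aseq m n p (m - 1) ≠ 0 := by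
      intro h2m hcon
      have hb0 := r_cond hpart (r := 1) le_rfl (by omega) hn hcon
      rw [show n - 1 + 1 = n by omega] at hb0
      exact hbn hb0
    refine ⟨?_, ?_, ?_, ?_⟩
    · intro j hj hjm
      have hne : aseq m n p (j + 1) ≠ 0 := by
        have := (hachar (m - 1) (by omega) (by omega)).mp (am1 (by omega))
        exact (hachar (j + 1) (by omega) (by omega)).mpr (by omega)
      exact (aseq_pair hpart hj).1 hne
    · intro h2m
      have ham1 := am1 h2m
      have hnn : (0:ℤ) ≤ aseq m n p m := le_max_right _ _
      rw [abs_of_nonneg hnn]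
      by_cases hamz : aseq m n p m = 0
      · rw [hamz]
        have : (0:ℤ) ≤ aseq m n p (m - 1) := le_max_right _ _
        omega
      · have hpair := aseq_pair (m := m) (n := n) hpart (j := m - 1) (by omega)
        rw [show m - 1 + 1 = m by omega] at hpair
        exact hpair.1 hamz
    · intro i hi hin
      exact (bseq_pair hpart hi).1 (ballnz i hi (by omega))
    · intro i hi hin
      have := ballnz i hi hin
      have h0 : (0:ℤ) ≤ bseq m n p i := le_max_right _ _
      omega

end Part1b

section Part2

variable {p : ℕ → ℕ} {m n : ℕ}

lemma recon_b (hp : IsPartition p) {i : ℕ} (h : bseq m n p i ≠ 0) :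
    (p i : ℤ) = bseq m n p i + m - n + i - 1 := by
  rw [bseq, max_ne_zero_iff] at h
  rw [bseq, max_eq_left (le_of_lt h)]
  ring

lemma recon_count (hphook : IsHook m n p) {i : ℕ} (hi : 1 ≤ i)
    (hcase : n < i ∨ (i ≤ n ∧ bseq m n p i = 0)) :
    p i = ((Finset.Icc 1 m).filter fun j =>
      aseq m n p j ≠ 0 ∧ (i : ℤ) ≤ aseq m n p j + n - m + j).card := by
  obtain ⟨hpart, hhook⟩ := hphook
  have hpim : p i ≤ m := by
    rcases hcase with h | ⟨hin, hb0⟩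
    · exact le_trans (part_mono hpart (n + 1) i (by omega) h) hhook
    · rw [bseq, max_eq_zero_iff'] at hb0; omega
  have hkey : ∀ j, 1 ≤ j → j ≤ m →
      ((aseq m n p j ≠ 0 ∧ (i : ℤ) ≤ aseq m n p j + n - m + j) ↔ j ≤ p i) := by
    intro j hj hjm
    constructor
    · rintro ⟨hne, hle⟩
      rw [aseq, max_ne_zero_iff] at hne
      rw [aseq, max_eq_left (le_of_lt hne)] at hle
      have : i ≤ transp p j := by omega
      exact (le_transp_iff hpart hi hj).mp this
    · intro hjp
      have hit : i ≤ transp p j := (le_transp_iff hpart hi hj).mpr hjp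
      have hne : aseq m n p j ≠ 0 := by
        rw [aseq, max_ne_zero_iff]
        by_contra hcon
        push_neg at hcon
        rcases hcase with h | ⟨hin, hb0⟩
        · omega
        · rw [bseq, max_eq_zero_iff'] at hb0
          omega
      refine ⟨hne, ?_⟩
      rw [aseq, max_ne_zero_iff] at hne
      rw [aseq, max_eq_left (le_of_lt hne)]
      omega
  have hset : ((Finset.Icc 1 m).filter fun j =>
      aseq m n p j ≠ 0 ∧ (i : ℤ) ≤ aseq m n p j + n - m + j) = Finset.Icc 1 (p i) := by
    ext j
    simp only [Finset.mem_filter, Finset.mem_Icc]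
    constructor
    · rintro ⟨⟨h1, h2⟩, h3⟩
      exact ⟨h1, (hkey j h1 h2).mp h3⟩
    · rintro ⟨h1, h2⟩
      exact ⟨⟨h1, le_trans h2 hpim⟩, (hkey j h1 (le_trans h2 hpim)).mpr h2⟩
  rw [hset, Nat.card_Icc]
  omega

lemma part2_main (hm : 1 ≤ m) (hn : 1 ≤ n) {p q : ℕ → ℕ}
    (hp : IsHook m n p) (hq : IsHook m n q)
    (ha : ∀ j, 1 ≤ j → j ≤ m → aseq m n p j = aseq m n q j)
    (hb : ∀ i, 1 ≤ i → i ≤ n → bseq m n p i = bseq m n q i)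
    (i : ℕ) (hi : 1 ≤ i) : p i = q i := by
  have hcount_eq : ((Finset.Icc 1 m).filter fun j =>
      aseq m n p j ≠ 0 ∧ (i : ℤ) ≤ aseq m n p j + n - m + j) =
      ((Finset.Icc 1 m).filter fun j =>
      aseq m n q j ≠ 0 ∧ (i : ℤ) ≤ aseq m n q j + n - m + j) := by
    apply Finset.filter_congr
    intro j hj
    simp only [Finset.mem_Icc] at hj
    rw [ha j hj.1 hj.2]
  by_cases hin : i ≤ n
  · by_cases hb0 : bseq m n p i = 0
    · have h1 := recon_count hp hi (Or.inr ⟨hin, hb0⟩)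
      have h2 := recon_count hq hi (Or.inr ⟨hin, by rw [← hb i hi hin]; exact hb0⟩)
      rw [h1, h2, hcount_eq]
    · have h1 := recon_b (m := m) (n := n) hp.1 hb0
      have h2 := recon_b (m := m) (n := n) hq.1
        (show bseq m n q i ≠ 0 by rw [← hb i hi hin]; exact hb0)
      rw [hb i hi hin] at h1
      omega
  · have h1 := recon_count hp hi (Or.inl (by omega))
    have h2 := recon_count hq hi (Or.inl (by omega))
    rw [h1, h2, hcount_eq]

end Part2

section Construct

lemma construct (m n la lb : ℕ) (A B : ℕ → ℤ)
    (hm : 1 ≤ m) (hn : 1 ≤ n) (hla : la ≤ m) (hlb : lb ≤ n)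
    (hApos : ∀ j, 1 ≤ j → j ≤ la → 0 ≤ A j)
    (hAstrict : ∀ j, 1 ≤ j → j + 1 ≤ la → A (j + 1) < A j)
    (hA0 : ∀ j, la < j → j ≤ m → A j = 0)
    (hB1 : ∀ i, 1 ≤ i → i ≤ lb → 1 ≤ B i)
    (hBstrict : ∀ i, 1 ≤ i → i + 1 ≤ lb → B (i + 1) < B i)
    (hB0 : ∀ i, lb < i → i ≤ n → B i = 0)
    (h5 : (la : ℤ) ≤ (m : ℤ) - n + lb)
    (h4 : 1 ≤ la → (lb : ℤ) + m ≤ A la + n + la)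
    (h8 : (lb : ℤ) + m ≤ (n : ℤ) + la + 1) :
    ∃ p, IsHook m n p ∧ (∀ j, 1 ≤ j → j ≤ m → aseq m n p j = A j) ∧
      (∀ i, 1 ≤ i → i ≤ n → bseq m n p i = B i) := by
  classical
  set t : ℕ → ℤ := fun j => A j + n - m + j with ht
  set cnt : ℕ → ℕ := fun i => ((Finset.Icc 1 la).filter fun j => (i : ℤ) ≤ t j).card with hcnt
  set p : ℕ → ℕ := fun i => if 1 ≤ i ∧ i ≤ lb then (B i + m - n + i - 1).toNat else cnt i
    with hpdef
  have hBlow : ∀ i, 1 ≤ i → i ≤ lb → (lb : ℤ) + 1 - i ≤ B i := by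
    intro i hi hilb
    have h1 := chain_le hBstrict i lb hi hilb le_rfl
    have h2 := hB1 lb (by omega) le_rfl
    omega
  have htanti : ∀ j k, 1 ≤ j → j ≤ k → k ≤ la → t k ≤ t j := by
    intro j k hj hjk hk
    have := chain_le hAstrict j k hj hjk hk
    simp only [ht]
    push_cast
    omega
  have htlb : ∀ j, 1 ≤ j → j ≤ la → (lb : ℤ) ≤ t j := by
    intro j hj hjla
    have h1 := htanti j la hj hjla le_rfl
    have h2 := h4 (by omega)
    simp only [ht] at h1 ⊢
    omega
  have hpval : ∀ i, 1 ≤ i → i ≤ lb → (p i : ℤ) = B i + m - n + i - 1 := by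
    intro i hi hilb
    have hnn : (0 : ℤ) ≤ B i + m - n + i - 1 := by
      have h1 := hBlow i hi hilb
      have h2 := h8
      omega
    simp only [hpdef]
    rw [if_pos ⟨hi, hilb⟩]
    exact Int.toNat_of_nonneg hnn
  have hpcnt : ∀ i, lb < i → p i = cnt i := by
    intro i hilb
    simp only [hpdef]
    rw [if_neg (by omega)]
  have hcnt_le : ∀ i, cnt i ≤ la := by
    intro i
    simp only [hcnt]
    exact le_trans (Finset.card_filter_le _ _) (by simp)
  have hcnt_anti : ∀ i i', i ≤ i' → cnt i' ≤ cnt i := by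
    intro i i' hii
    apply Finset.card_le_card
    intro x hx
    simp only [Finset.mem_filter] at hx ⊢
    exact ⟨hx.1, le_trans (by exact_mod_cast hii) hx.2⟩
  have hcnt_lower : ∀ (j0 i : ℕ), 1 ≤ j0 → j0 ≤ la → (i : ℤ) ≤ t j0 → j0 ≤ cnt i := by
    intro j0 i hj0 hj0la hle
    have hsub : Finset.Icc 1 j0 ⊆ (Finset.Icc 1 la).filter fun j => (i : ℤ) ≤ t j := by
      intro k hk
      simp only [Finset.mem_Icc, Finset.mem_filter] at *
      exact ⟨⟨hk.1, by omega⟩, le_trans hle (htanti k j0 hk.1 hk.2 hj0la)⟩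
    have := Finset.card_le_card hsub
    rw [Nat.card_Icc] at this
    simp only [hcnt]
    omega
  have hcnt_upper : ∀ (j0 i : ℕ), 1 ≤ j0 → j0 ≤ la → t j0 < (i : ℤ) → cnt i ≤ j0 - 1 := by
    intro j0 i hj0 hj0la hlt
    have hsub : ((Finset.Icc 1 la).filter fun j => (i : ℤ) ≤ t j) ⊆ Finset.Icc 1 (j0 - 1) := by
      intro k hk
      simp only [Finset.mem_Icc, Finset.mem_filter] at hk ⊢
      refine ⟨hk.1.1, ?_⟩
      by_contra hcon
      have := htanti j0 k hj0 (by omega) hk.1.2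
      omega
    have := Finset.card_le_card hsub
    rw [Nat.card_Icc] at this
    simp only [hcnt]
    omega
  have hstep : ∀ i, 1 ≤ i → p (i + 1) ≤ p i := by
    intro i hi
    rcases le_or_gt (i + 1) lb with h1 | h1
    · have e1 := hpval (i + 1) (by omega) h1
      have e2 := hpval i hi (by omega)
      have := hBstrict i hi h1
      omega
    · rcases le_or_gt i lb with h2 | h2
      · have e2 := hpval i hi h2
        have e1 : p (i + 1) = cnt (i + 1) := hpcnt _ (by omega)
        have h3 := hcnt_le (i + 1)
        have h4' := hBlow i hi h2
        omega
      · rw [hpcnt i h2, hpcnt (i + 1) (by omega)]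
        exact hcnt_anti i (i + 1) (by omega)
  have hfin : ∃ N, ∀ i, N ≤ i → p i = 0 := by
    refine ⟨lb + (A 1 + n).toNat + 1, fun i hNi => ?_⟩
    rw [hpcnt i (by omega)]
    simp only [hcnt]
    rw [Finset.card_eq_zero, Finset.filter_eq_empty_iff]
    intro j hj
    simp only [Finset.mem_Icc] at hj
    have h1 := htanti 1 j le_rfl hj.1 hj.2
    have h2 : t 1 = A 1 + ↑n - ↑m + 1 := by simp [ht]
    have h3 : A 1 + n ≤ ((A 1 + n).toNat : ℤ) := Int.self_le_toNat _
    omega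
  have hpart : IsPartition p := ⟨hstep, hfin⟩
  have hhook : IsHook m n p := by
    refine ⟨hpart, ?_⟩
    rw [hpcnt (n + 1) (by omega)]
    exact le_trans (hcnt_le _) hla
  refine ⟨p, hhook, ?_, ?_⟩
  · intro j hj hjm
    rcases le_or_gt j la with hjla | hjla
    · have htj0 : (0 : ℤ) ≤ t j := le_trans (by exact_mod_cast Nat.zero_le lb) (htlb j hj hjla)
      set K := (t j).toNat with hK
      have hKt : (K : ℤ) = t j := Int.toNat_of_nonneg htj0
      have hKlb : lb ≤ K := by
        have := htlb j hj hjla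
        omega
      have htr : transp p j = K := by
        apply transp_eq hpart hj
        · intro hK1
          rcases le_or_gt K lb with hKle | hKgt
          · have e := hpval K hK1 (by omega)
            have hBlb := hB1 K (by omega) (by omega)
            have hAj := hApos j hj hjla
            have hKv : (K : ℤ) = A j + n - m + j := by rw [hKt]
            have : (j : ℤ) ≤ (p K : ℤ) := by rw [e]; omega
            exact_mod_cast this
          · have := hcnt_lower j K hj hjla (by omega)
            rw [hpcnt K hKgt]
            exact this
        · rw [hpcnt (K + 1) (by omega)]
          have := hcnt_upper j (K + 1) hj hjla (by push_cast; omega)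
          omega
      rw [aseq, htr, hKt]
      simp only [ht]
      have hAj := hApos j hj hjla
      rw [max_eq_left (by omega)]
      omega
    · have hA := hA0 j hjla hjm
      have htr : transp p j ≤ lb := by
        apply transp_le hpart hj
        intro k hk
        rw [hpcnt k hk]
        have := hcnt_le k
        omega
      rw [aseq, hA, max_eq_zero_iff']
      omega
  · intro i hi hin
    rcases le_or_gt i lb with hilb | hilb
    · have e := hpval i hi hilb
      have hBi := hB1 i hi hilb
      rw [bseq, e, show B i + (m : ℤ) - n + i - 1 - m + n - i + 1 = B i by ring]
      exact max_eq_left (by omega)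
    · have hB := hB0 i hilb hin
      rw [bseq, hpcnt i hilb, hB, max_eq_zero_iff']
      have := hcnt_le i
      omega

end Construct

section Part3

lemma construct_dwt {m n : ℕ} {A B : ℕ → ℤ} (hm : 1 ≤ m) (hn : 1 ≤ n)
    (hD : DominantWithTail m n A B) :
    ∃ p, IsHook m n p ∧ (∀ j, 1 ≤ j → j ≤ m → aseq m n p j = A j) ∧
      (∀ i, 1 ≤ i → i ≤ n → bseq m n p i = B i) := by
  obtain ⟨hA0', hB0', hAp, hBp, hAm, hBn, hz1, hz2⟩ := hD
  obtain ⟨la, hlam, hachar, hacard⟩ :=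
    seg_char (A := A) (m := m) (fun j hj hjm h0 => (hAp j hj hjm).2 h0)
  obtain ⟨lb, hlbn, hbchar, hbcard⟩ :=
    seg_char (A := B) (m := n) (fun i hi hin h0 => (hBp i hi hin).2 h0)
  have hZa : zcount m A = m - la := hacard
  have hZb : zcount n B = n - lb := hbcard
  apply construct m n la lb A B hm hn hlam hlbn
  · exact fun j hj hjla => hA0' j hj (le_trans hjla hlam)
  · intro j hj hj1
    exact (hAp j hj (by omega)).1 ((hachar (j + 1) (by omega) (by omega)).mpr hj1)
  · intro j hjla hjm
    by_contra hne
    exact absurd ((hachar j (by omega) hjm).mp hne) (by omega)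
  · intro i hi hilb
    have h1 := hB0' i hi (le_trans hilb hlbn)
    have h2 := (hbchar i hi (le_trans hilb hlbn)).mpr hilb
    omega
  · intro i hi hi1
    exact (hBp i hi (by omega)).1 ((hbchar i hi (by omega)).mpr (by omega))
  · intro i hilb hin
    by_contra hne
    exact absurd ((hbchar i (by omega) hin).mp hne) (by omega)
  · omega
  · intro hla1
    have h1 := (hachar la hla1 hlam).mpr le_rfl
    have h2 := hA0' la hla1 hlam
    omega
  · omega

lemma construct_tailless {m n : ℕ} {A B : ℕ → ℤ} (hm : 1 ≤ m) (hn : 1 ≤ n)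
    (hT : Tailless m n A B) (hAm : 0 ≤ A m) :
    ∃ p, IsHook m n p ∧ (∀ j, 1 ≤ j → j ≤ m → aseq m n p j = A j) ∧
      (∀ i, 1 ≤ i → i ≤ n → bseq m n p i = B i) := by
  obtain ⟨hT1, hT2, hT3, hT4⟩ := hT
  have hAstrictAll : ∀ j, 1 ≤ j → j + 1 ≤ m → A (j + 1) < A j := by
    intro j hj hj1
    rcases lt_or_eq_of_le hj1 with h | h
    · exact hT1 j hj h
    · have habs := lt_of_le_of_lt (le_abs_self (A m)) (hT2 (by omega))
      rw [show m - 1 = j by omega] at habs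
      rw [h]
      exact habs
  apply construct m n m n A B hm hn le_rfl le_rfl
  · intro j hj hjm
    have := chain_le hAstrictAll j m hj hjm le_rfl
    omega
  · exact hAstrictAll
  · intro j h1 h2; omega
  · intro i hi hin
    have h1 := chain_le hT3 i n hi hin le_rfl
    have h2 := hT4 n hn le_rfl
    omega
  · exact hT3
  · intro i h1 h2; omega
  · omega
  · intro _; omega
  · omega

end Part3


theorem hook_partitions_inject_into_dominant_weights (m n : ℕ)
    (hm : 1 ≤ m) (hn : 1 ≤ n) :
    -- (1) the image of a hook partition has the asserted shape and is dominant
    (∀ p, IsHook m n p →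
      (∀ j, 1 ≤ j → j + 1 ≤ m →
        (aseq m n p (j + 1) ≠ 0 → aseq m n p (j + 1) < aseq m n p j) ∧
        (aseq m n p j = 0 → aseq m n p (j + 1) = 0)) ∧
      (∀ i, 1 ≤ i → i + 1 ≤ n →
        (bseq m n p i ≠ 0 → bseq m n p (i + 1) < bseq m n p i) ∧
        (bseq m n p i = 0 → bseq m n p (i + 1) = 0)) ∧
      (∀ s, s < m → s < n → aseq m n p (m - s) ≠ 0 → bseq m n p (n - s) ≠ 0) ∧
      (∀ r, 1 ≤ r → r < m → r ≤ n →
        aseq m n p (m - r) = 0 → bseq m n p (n - r + 1) = 0) ∧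
      zcount n (bseq m n p) ≤ zcount m (aseq m n p) ∧
      zcount m (aseq m n p) ≤ zcount n (bseq m n p) + 1 ∧
      Dominant m n (aseq m n p) (bseq m n p)) ∧
    -- (2) the assignment is injective on hook partitions
    (∀ p q, IsHook m n p → IsHook m n q →
      (∀ j, 1 ≤ j → j ≤ m → aseq m n p j = aseq m n q j) →
      (∀ i, 1 ≤ i → i ≤ n → bseq m n p i = bseq m n q i) →
      ∀ i, 1 ≤ i → p i = q i) ∧
    -- (3) its image consists exactly of the dominant weights which are not
    --     tailless with `a_m < 0`
    (∀ A B : ℕ → ℤ, Dominant m n A B →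
      ((∃ p, IsHook m n p ∧
          (∀ j, 1 ≤ j → j ≤ m → aseq m n p j = A j) ∧
          (∀ i, 1 ≤ i → i ≤ n → bseq m n p i = B i))
        ↔ ¬ (Tailless m n A B ∧ A m < 0))) := by
  refine ⟨fun p hp => part1_main hm hn hp,
    fun p q hp hq ha hb => part2_main hm hn hp hq ha hb, ?_⟩
  intro A B hD
  constructor
  · rintro ⟨p, hp, ha, hb⟩ ⟨hT, hAm⟩
    have h1 := ha m hm le_rfl
    have h2 : (0 : ℤ) ≤ aseq m n p m := le_max_right _ _
    omega
  · intro hnot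
    rcases hD with hT | hD
    · have hAm : 0 ≤ A m := by
        by_contra h
        exact hnot ⟨hT, by omega⟩
      exact construct_tailless hm hn hT hAm
    · exact construct_dwt hm hn hD
end
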